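/- arXiv:math/0305231 — 11 statements merged into one kernel-verified Lean document; each statement's English description precedes it below -/
import Mathlib

section
/- Let f be a real-valued function differentiable on an interval [a,b] not containing 0 (i.e., a ≤ b and 0 ∉ [a,b]). Then for every pair of points x₁, x₂ ∈ [a,b] with x₁ ≠ x₂, there exists a point ξ strictly between x₁ and x₂ such that (x₁·f(x₂) − x₂·f(x₁))/(x₁ − x₂) = f(ξ) − ξ·f′(ξ). -/
/-!
Cauchy's mean value theorem applied to `t ↦ f t / t` and `t ↦ 1 / t`, which is legitimate because
the interval avoids `0`: the quotient of their slopes is `(c f(d) - d f(c)) / (c - d)` and the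
quotient of their derivatives at `ξ` is `f(ξ) - ξ f'(ξ)`.
-/

open Set

theorem exists_pompeiu_of_lt {f f' : ℝ → ℝ} {c d : ℝ} (hcd : c < d) (h0 : (0 : ℝ) ∉ Icc c d)
    (hfc : ContinuousOn f (Icc c d)) (hff' : ∀ x ∈ Ioo c d, HasDerivAt f (f' x) x) :
    ∃ ξ ∈ Ioo c d, (c * f d - d * f c) / (c - d) = f ξ - ξ * f' ξ := by
  have hne : ∀ t ∈ Icc c d, t ≠ 0 := fun t ht h => h0 (h ▸ ht)
  have hinv : ContinuousOn (·⁻¹) (Icc c d) := continuousOn_id.inv₀ hne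
  have hinv' : ∀ x ∈ Ioo c d, HasDerivAt (·⁻¹) (-(x ^ 2)⁻¹) x :=
    fun x hx => hasDerivAt_inv (hne x (Ioo_subset_Icc_self hx))
  obtain ⟨ξ, hξ, hcauchy⟩ := exists_ratio_hasDerivAt_eq_ratio_slope
    (fun t => f t * t⁻¹) (fun t => f' t * t⁻¹ + f t * -(t ^ 2)⁻¹) hcd (hfc.mul hinv)
    (fun x hx => (hff' x hx).mul (hinv' x hx)) (·⁻¹) (fun t => -(t ^ 2)⁻¹) hinv hinv'
  refine ⟨ξ, hξ, ?_⟩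
  have hc := hne c (left_mem_Icc.2 hcd.le)
  have hd := hne d (right_mem_Icc.2 hcd.le)
  have hξ0 := hne ξ (Ioo_subset_Icc_self hξ)
  rw [div_eq_iff (sub_ne_zero.2 hcd.ne)]
  field_simp at hcauchy
  linear_combination hcauchy

theorem exists_pompeiu_of_ne {f f' : ℝ → ℝ} {x₁ x₂ : ℝ} (hne : x₁ ≠ x₂)
    (h0 : (0 : ℝ) ∉ uIcc x₁ x₂) (hfc : ContinuousOn f (uIcc x₁ x₂))
    (hff' : ∀ x ∈ Ioo (min x₁ x₂) (max x₁ x₂), HasDerivAt f (f' x) x) :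
    ∃ ξ ∈ Ioo (min x₁ x₂) (max x₁ x₂),
      (x₁ * f x₂ - x₂ * f x₁) / (x₁ - x₂) = f ξ - ξ * f' ξ := by
  rcases hne.lt_or_gt with h | h
  · rw [uIcc_of_le h.le] at h0 hfc
    rw [min_eq_left h.le, max_eq_right h.le] at hff' ⊢
    exact exists_pompeiu_of_lt h h0 hfc hff'
  · rw [uIcc_of_ge h.le] at h0 hfc
    rw [min_eq_right h.le, max_eq_left h.le] at hff' ⊢
    obtain ⟨ξ, hξ, hpompeiu⟩ := exists_pompeiu_of_lt h h0 hfc hff'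
    refine ⟨ξ, hξ, ?_⟩
    rw [← hpompeiu, ← neg_div_neg_eq, neg_sub, neg_sub]

theorem pompeiu_mean_value_theorem_general (a b : ℝ) (f : ℝ → ℝ)
    (h0 : (0:ℝ) ∉ Set.Icc a b)
    (hf : DifferentiableOn ℝ f (Set.Icc a b))
    (x₁ x₂ : ℝ) (hx₁ : x₁ ∈ Set.Icc a b) (hx₂ : x₂ ∈ Set.Icc a b) (hne : x₁ ≠ x₂) :
    ∃ ξ ∈ Set.Ioo (min x₁ x₂) (max x₁ x₂),
      (x₁ * f x₂ - x₂ * f x₁) / (x₁ - x₂) =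
        f ξ - ξ * derivWithin f (Set.Icc a b) ξ := by
  have hsub : uIcc x₁ x₂ ⊆ Icc a b := uIcc_subset_Icc hx₁ hx₂
  refine exists_pompeiu_of_ne hne (fun h => h0 (hsub h)) (hf.continuousOn.mono hsub)
    fun x hx => ?_
  have hx' : x ∈ Ioo a b := Ioo_subset_Ioo (le_min hx₁.1 hx₂.1) (max_le hx₁.2 hx₂.2) hx
  exact (hf x (Ioo_subset_Icc_self hx')).hasDerivWithinAt.hasDerivAt (Icc_mem_nhds hx'.1 hx'.2)

/-- Pompeiu's mean value theorem. -/
theorem pompeiu_mean_value_theorem (a b : ℝ) (f : ℝ → ℝ)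
    (hab : a ≤ b) (h0 : (0:ℝ) ∉ Set.Icc a b)
    (hf : DifferentiableOn ℝ f (Set.Icc a b))
    (x₁ x₂ : ℝ) (hx₁ : x₁ ∈ Set.Icc a b) (hx₂ : x₂ ∈ Set.Icc a b) (hne : x₁ ≠ x₂) :
    ∃ ξ ∈ Set.Ioo (min x₁ x₂) (max x₁ x₂),
      (x₁ * f x₂ - x₂ * f x₁) / (x₁ - x₂) =
        f ξ - ξ * derivWithin f (Set.Icc a b) ξ :=
  pompeiu_mean_value_theorem_general a b f h0 hf x₁ x₂ hx₁ hx₂ hne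
end

section
/- Let f : [a,b] → ℝ be continuous on [a,b] and differentiable on (a,b), where the interval [a,b] does not contain 0. Then for every x ∈ [a,b], |((a+b)/2)·(f(x)/x) − (1/(b−a))·∫ₐᵇ f(t) dt| ≤ ((b−a)/|x|)·[1/4 + ((x − (a+b)/2)/(b−a))²]·‖f − ℓf′‖∞, where ℓ(t) = t and ‖f − ℓf′‖∞ := sup over ξ ∈ (a,b) of |f(ξ) − ξ·f′(ξ)|, assumed finite. -/
open Set intervalIntegral

/-- Theorem 3.1: an Ostrowski type inequality via Pompeiu's mean value theorem. -/
theorem ostrowski_pompeiu (a b : ℝ) (f : ℝ → ℝ)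
    (hab : a < b) (h0 : (0:ℝ) ∉ Set.Icc a b)
    (hf : ContinuousOn f (Set.Icc a b))
    (hd : DifferentiableOn ℝ f (Set.Ioo a b))
    (hbdd : BddAbove ((fun ξ => |f ξ - ξ * deriv f ξ|) '' Set.Ioo a b))
    (x : ℝ) (hx : x ∈ Set.Icc a b) :
    |(a + b) / 2 * (f x / x) - (1 / (b - a)) * ∫ t in a..b, f t| ≤
      (b - a) / |x| * (1 / 4 + ((x - (a + b) / 2) / (b - a)) ^ 2) *
        sSup ((fun ξ => |f ξ - ξ * deriv f ξ|) '' Set.Ioo a b) := by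
  set M := sSup ((fun ξ => |f ξ - ξ * deriv f ξ|) '' Set.Ioo a b) with hM
  have hne0 : ∀ s ∈ Set.Icc a b, s ≠ 0 := fun s hs h => h0 (h ▸ hs)
  have hMb : ∀ ξ ∈ Set.Ioo a b, |f ξ - ξ * deriv f ξ| ≤ M :=
    fun ξ hξ => le_csSup hbdd ⟨ξ, hξ, rfl⟩
  obtain ⟨ξ₀, hξ₀⟩ := Set.nonempty_Ioo.mpr hab
  have hM0 : 0 ≤ M := le_trans (abs_nonneg _) (hMb ξ₀ hξ₀)
  have hx0 : x ≠ 0 := hne0 x hx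
  have hba : (0:ℝ) < b - a := by linarith
  -- Pompeiu step
  have key : ∀ u ∈ Set.Icc a b, ∀ v ∈ Set.Icc a b, u < v →
      |u * f v - v * f u| ≤ M * (v - u) := by
    intro u hu v hv huv
    have hsub : Set.Icc u v ⊆ Set.Icc a b := Set.Icc_subset_Icc hu.1 hv.2
    have hsubo : Set.Ioo u v ⊆ Set.Ioo a b := Set.Ioo_subset_Ioo hu.1 hv.2
    have hFc : ContinuousOn (fun s => f s / s) (Set.Icc u v) :=
      (hf.mono hsub).div (continuousOn_id) (fun s hs => hne0 s (hsub hs))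
    have hGc : ContinuousOn (fun s => s⁻¹) (Set.Icc u v) :=
      ContinuousOn.inv₀ continuousOn_id (fun s hs => hne0 s (hsub hs))
    have hFd : ∀ c ∈ Set.Ioo u v,
        HasDerivAt (fun s => f s / s) ((deriv f c * c - f c * 1) / c ^ 2) c := by
      intro c hc
      have hc' := hsubo hc
      have hdc : HasDerivAt f (deriv f c) c :=
        ((hd c hc').differentiableAt (isOpen_Ioo.mem_nhds hc')).hasDerivAt
      exact hdc.div (hasDerivAt_id c) (hne0 c (hsub (Set.Ioo_subset_Icc_self hc)))
    have hGd : ∀ c ∈ Set.Ioo u v, HasDerivAt (fun s => s⁻¹) (-(c ^ 2)⁻¹) c :=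
      fun c hc => hasDerivAt_inv (hne0 c (hsub (Set.Ioo_subset_Icc_self hc)))
    obtain ⟨c, hc, hcc⟩ := exists_ratio_hasDerivAt_eq_ratio_slope
      (fun s => f s / s) (fun c => (deriv f c * c - f c * 1) / c ^ 2) huv hFc hFd
      (fun s => s⁻¹) (fun c => -(c ^ 2)⁻¹) hGc hGd
    have hcne : c ≠ 0 := hne0 c (hsub (Set.Ioo_subset_Icc_self hc))
    have hune : u ≠ 0 := hne0 u hu
    have hvne : v ≠ 0 := hne0 v hv
    have heq : u * f v - v * f u = (v - u) * (c * deriv f c - f c) := by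
      field_simp at hcc
      linarith [hcc]
    rw [heq, abs_mul, abs_of_pos (by linarith : (0:ℝ) < v - u), mul_comm]
    apply mul_le_mul_of_nonneg_right _ (by linarith)
    rw [abs_sub_comm]
    exact hMb c (hsubo hc)
  -- pointwise bound on [a,b]
  have ptw : ∀ t ∈ Set.Icc a b, |t * f x - x * f t| ≤ M * |x - t| := by
    intro t ht
    rcases lt_trichotomy t x with h | h | h
    · rw [abs_of_pos (by linarith : (0:ℝ) < x - t)]; exact key t ht x hx h
    · simp [h]
    · rw [abs_of_neg (by linarith : x - t < 0), abs_sub_comm]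
      have := key x hx t ht h
      calc |x * f t - t * f x| ≤ M * (t - x) := this
        _ = M * -(x - t) := by ring
  -- integrability
  have huIcc : Set.uIcc a b = Set.Icc a b := Set.uIcc_of_le hab.le
  have hfint : IntervalIntegrable f MeasureTheory.volume a b :=
    (hf.mono huIcc.subset).intervalIntegrable
  have hgc : ContinuousOn (fun t => t * f x - x * f t) (Set.Icc a b) :=
    (continuousOn_id.mul continuousOn_const).sub (continuousOn_const.mul hf)
  have hgint : IntervalIntegrable (fun t => t * f x - x * f t) MeasureTheory.volume a b :=
    (hgc.mono huIcc.subset).intervalIntegrable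
  have hgabs : IntervalIntegrable (fun t => |t * f x - x * f t|) MeasureTheory.volume a b :=
    hgint.abs
  have hbnd : IntervalIntegrable (fun t => M * |x - t|) MeasureTheory.volume a b := by
    exact (continuous_const.mul ((continuous_const.sub continuous_id).abs)).intervalIntegrable _ _
  -- value of ∫ g
  have hIg : (∫ t in a..b, (t * f x - x * f t)) =
      (b ^ 2 - a ^ 2) / 2 * f x - x * ∫ t in a..b, f t := by
    rw [intervalIntegral.integral_sub
        ((intervalIntegrable_id).mul_const (f x)) (hfint.const_mul x),
      intervalIntegral.integral_mul_const, intervalIntegral.integral_const_mul,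
      integral_id]
  -- |∫ g| ≤ ∫ |g| ≤ ∫ M |x−t|
  have h1 : |∫ t in a..b, (t * f x - x * f t)| ≤ ∫ t in a..b, M * |x - t| := by
    calc |∫ t in a..b, (t * f x - x * f t)| ≤ ∫ t in a..b, |t * f x - x * f t| :=
          intervalIntegral.abs_integral_le_integral_abs hab.le
      _ ≤ ∫ t in a..b, M * |x - t| :=
          intervalIntegral.integral_mono_on hab.le hgabs hbnd ptw
  -- compute ∫ M |x−t|
  have habs_int : (∫ t in a..b, M * |x - t|) =
      M * (((x - a) ^ 2 + (b - x) ^ 2) / 2) := by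
    rw [intervalIntegral.integral_const_mul]
    congr 1
    have hsplit : (∫ t in a..b, |x - t|) =
        (∫ t in a..x, |x - t|) + ∫ t in x..b, |x - t| := by
      rw [intervalIntegral.integral_add_adjacent_intervals] <;>
        exact ((continuous_const.sub continuous_id).abs).intervalIntegrable _ _
    rw [hsplit]
    have e1 : (∫ t in a..x, |x - t|) = (∫ t in a..x, (x - t)) := by
      apply intervalIntegral.integral_congr
      intro t ht
      rw [Set.uIcc_of_le hx.1] at ht
      exact abs_of_nonneg (by linarith [ht.2])
    have e2 : (∫ t in x..b, |x - t|) = (∫ t in x..b, (t - x)) := by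
      apply intervalIntegral.integral_congr
      intro t ht
      rw [Set.uIcc_of_le hx.2] at ht
      show |x - t| = t - x
      rw [abs_sub_comm]
      exact abs_of_nonneg (by linarith [ht.1])
    rw [e1, e2,
      intervalIntegral.integral_sub intervalIntegrable_const intervalIntegrable_id,
      intervalIntegral.integral_sub intervalIntegrable_id intervalIntegrable_const,
      integral_id, integral_id, intervalIntegral.integral_const,
      intervalIntegral.integral_const]
    simp only [smul_eq_mul]
    ring
  -- rewrite LHS
  have hxabs : (0:ℝ) < |x| := abs_pos.mpr hx0
  have hLHS : (a + b) / 2 * (f x / x) - (1 / (b - a)) * ∫ t in a..b, f t =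
      (1 / ((b - a) * x)) * ∫ t in a..b, (t * f x - x * f t) := by
    rw [hIg]
    field_simp
    ring
  rw [hLHS, abs_mul, abs_div, abs_one, abs_mul, abs_of_pos hba]
  calc 1 / ((b - a) * |x|) * |∫ t in a..b, (t * f x - x * f t)|
      ≤ 1 / ((b - a) * |x|) * (M * (((x - a) ^ 2 + (b - x) ^ 2) / 2)) := by
        apply mul_le_mul_of_nonneg_left _ (by positivity)
        rw [← habs_int]; exact h1
    _ = (b - a) / |x| * (1 / 4 + ((x - (a + b) / 2) / (b - a)) ^ 2) * M := by
        field_simp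
        ring
end

section
/- The constant 1/4 in the Ostrowski–Pompeiu inequality is sharp: if k > 0 is a constant such that for every function f continuous on [a,b] and differentiable on (a,b) (with [a,b] not containing 0 and a < b) and every x ∈ [a,b] one has |((a+b)/2)·(f(x)/x) − (1/(b−a))·∫ₐᵇ f(t) dt| ≤ ((b−a)/|x|)·[k + ((x − (a+b)/2)/(b−a))²]·‖f − ℓf′‖∞, then k ≥ 1/4. (In fact, testing with f(t) = αt + β, α, β ≠ 0, and x = a or x = b already forces k ≥ 1/4.) -/
/-- Sharpness of the constant 1/4 in the Ostrowski–Pompeiu inequality. -/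
theorem ostrowski_pompeiu_sharp (a b k : ℝ) (hab : a < b) (h0 : (0:ℝ) ∉ Set.Icc a b)
    (hk : 0 < k)
    (H : ∀ f : ℝ → ℝ, ContinuousOn f (Set.Icc a b) →
      DifferentiableOn ℝ f (Set.Ioo a b) →
      BddAbove ((fun ξ => |f ξ - ξ * deriv f ξ|) '' Set.Ioo a b) →
      ∀ x ∈ Set.Icc a b,
        |(a + b) / 2 * (f x / x) - (1 / (b - a)) * ∫ t in a..b, f t| ≤
          (b - a) / |x| * (k + ((x - (a + b) / 2) / (b - a)) ^ 2) *
            sSup ((fun ξ => |f ξ - ξ * deriv f ξ|) '' Set.Ioo a b)) :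
    k ≥ 1 / 4 := by
  have ha : a ≠ 0 := by
    intro h; subst h; exact h0 ⟨le_refl 0, hab.le⟩
  set f : ℝ → ℝ := fun t => t + 1 with hf
  have hd : ∀ ξ : ℝ, deriv f ξ = 1 := by
    intro ξ; simp [hf]
  have hfun : (fun ξ => |f ξ - ξ * deriv f ξ|) = fun _ : ℝ => (1:ℝ) := by
    funext ξ; simp [hd ξ, hf]
  have hne : (Set.Ioo a b).Nonempty := Set.nonempty_Ioo.2 hab
  have himg : ((fun ξ => |f ξ - ξ * deriv f ξ|) '' Set.Ioo a b) = {1} := by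
    rw [hfun]
    exact hne.image_const 1
  have hsup : sSup ((fun ξ => |f ξ - ξ * deriv f ξ|) '' Set.Ioo a b) = 1 := by
    rw [himg]; exact csSup_singleton 1
  have hbdd : BddAbove ((fun ξ => |f ξ - ξ * deriv f ξ|) '' Set.Ioo a b) := by
    rw [himg]; exact bddAbove_singleton
  have hcont : ContinuousOn f (Set.Icc a b) := (continuous_id.add continuous_const).continuousOn
  have hdiff : DifferentiableOn ℝ f (Set.Ioo a b) :=
    (differentiable_id.add_const 1).differentiableOn
  have hint : (∫ t in a..b, f t) = (b ^ 2 - a ^ 2) / 2 + (b - a) := by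
    have h1 : (∫ t in a..b, f t) = (∫ t in a..b, (t:ℝ)) + ∫ t in a..b, (1:ℝ) :=
      intervalIntegral.integral_add intervalIntegral.intervalIntegrable_id
        (continuous_const.intervalIntegrable a b)
    rw [h1, integral_id, intervalIntegral.integral_const, smul_eq_mul]
    ring
  have ha_mem : a ∈ Set.Icc a b := ⟨le_refl a, hab.le⟩
  have key := H f hcont hdiff hbdd a ha_mem
  rw [hsup, hint] at key
  have hba : (0:ℝ) < b - a := by linarith
  have habs : |a| > 0 := abs_pos.2 ha
  have e1 : (a + b) / 2 * (f a / a) - (1 / (b - a)) * ((b ^ 2 - a ^ 2) / 2 + (b - a)) =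
      (b - a) / (2 * a) := by
    field_simp [hf]
    ring
  rw [e1] at key
  have e2 : ((a - (a + b) / 2) / (b - a)) ^ 2 = 1 / 4 := by
    field_simp
    ring
  rw [e2] at key
  have e3 : |(b - a) / (2 * a)| = (b - a) / (2 * |a|) := by
    rw [abs_div, abs_of_pos hba, abs_mul, abs_two]
  rw [e3, mul_one] at key
  -- key : (b - a) / (2 * |a|) ≤ (b - a) / |a| * (k + 1/4)
  rw [div_mul_eq_mul_div, div_le_div_iff₀ (by positivity) habs] at key
  nlinarith [key, mul_pos hba habs]
end

section
/- Let f : [a,b] → ℝ be continuous on [a,b] and differentiable on (a,b), where the interval [a,b] does not contain 0, and let w : [a,b] → ℝ be a nonnegative integrable function. Then for each x ∈ [a,b], |∫ₐᵇ f(t)w(t) dt − (f(x)/x)·∫ₐᵇ t·w(t) dt| ≤ ‖f − ℓf′‖∞ · [ sgn(x)·(∫ₐˣ w(t) dt − ∫ₓᵇ w(t) dt) + (1/|x|)·(∫ₓᵇ t·w(t) dt − ∫ₐˣ t·w(t) dt) ]. -/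
/-!
Applying Cauchy's mean value theorem to `u ↦ f u / u` and `u ↦ 1 / u` gives Pompeiu's mean value
theorem: `x f(t) - t f(x) = (x - t) (f(ξ) - ξ f'(ξ))` for some `ξ` between `t` and `x`. Hence
`|f(t) - (f(x) / x) t| ≤ M |t - x| / |x|` with `M = ‖f - ℓf'‖∞`; multiplying by `w ≥ 0` and
integrating, the weighted bound follows from splitting `∫ₐᵇ |t - x| w(t) dt` at `x`.
-/

open Set intervalIntegral MeasureTheory

theorem Real.sign_eq_div_abs (x : ℝ) : Real.sign x = x / |x| := by
  rcases lt_trichotomy x 0 with h | rfl | h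
  · rw [Real.sign_of_neg h, abs_of_neg h, div_neg, div_self h.ne]
  · simp
  · rw [Real.sign_of_pos h, abs_of_pos h, div_self h.ne']

theorem exists_pompeiu_mean_value {f : ℝ → ℝ} {p q : ℝ} (hpq : p < q) (h0 : (0 : ℝ) ∉ Icc p q)
    (hf : ContinuousOn f (Icc p q)) (hd : DifferentiableOn ℝ f (Ioo p q)) :
    ∃ c ∈ Ioo p q, q * f p - p * f q = (q - p) * (f c - c * deriv f c) := by
  have hne : ∀ u ∈ Icc p q, u ≠ 0 := fun u hu h => h0 (h ▸ hu)
  have hderiv : ∀ c ∈ Ioo p q,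
      HasDerivAt (fun u => f u / u) ((deriv f c * c - f c * 1) / c ^ 2) c := fun c hc =>
    ((hd c hc).differentiableAt (isOpen_Ioo.mem_nhds hc)).hasDerivAt.div (hasDerivAt_id c)
      (hne c (Ioo_subset_Icc_self hc))
  obtain ⟨c, hc, hcauchy⟩ := exists_ratio_hasDerivAt_eq_ratio_slope (fun u => f u / u) _ hpq
    (hf.div continuousOn_id hne) hderiv (fun u : ℝ => u⁻¹) (fun c => -(c ^ 2)⁻¹)
    (continuousOn_id.inv₀ hne) fun c hc => hasDerivAt_inv (hne c (Ioo_subset_Icc_self hc))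
  refine ⟨c, hc, ?_⟩
  have hp : p ≠ 0 := hne p (left_mem_Icc.2 hpq.le)
  have hq : q ≠ 0 := hne q (right_mem_Icc.2 hpq.le)
  have hc0 : c ≠ 0 := hne c (Ioo_subset_Icc_self hc)
  field_simp at hcauchy
  linear_combination -hcauchy

theorem abs_mul_sub_mul_le_of_abs_sub_mul_deriv_le {f : ℝ → ℝ} {a b M : ℝ}
    (h0 : (0 : ℝ) ∉ Icc a b) (hf : ContinuousOn f (Icc a b))
    (hd : DifferentiableOn ℝ f (Ioo a b)) (hM : ∀ ξ ∈ Ioo a b, |f ξ - ξ * deriv f ξ| ≤ M)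
    {x t : ℝ} (hx : x ∈ Icc a b) (ht : t ∈ Icc a b) :
    |x * f t - t * f x| ≤ M * |t - x| := by
  wlog htx : t ≤ x generalizing x t
  · rw [abs_sub_comm, abs_sub_comm t]
    exact this ht hx (le_of_not_ge htx)
  rcases htx.eq_or_lt with rfl | htx
  · simp
  have hsub : Icc t x ⊆ Icc a b := Icc_subset_Icc ht.1 hx.2
  obtain ⟨c, hc, hpompeiu⟩ := exists_pompeiu_mean_value htx (fun h => h0 (hsub h))
    (hf.mono hsub) (hd.mono (Ioo_subset_Ioo ht.1 hx.2))
  rw [hpompeiu, abs_mul, abs_of_pos (sub_pos.2 htx), abs_sub_comm t x, abs_of_pos (sub_pos.2 htx),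
    mul_comm M]
  exact mul_le_mul_of_nonneg_left (hM c (Ioo_subset_Ioo ht.1 hx.2 hc)) (sub_pos.2 htx).le

theorem abs_integral_mul_le_integral_mul_of_abs_le {g h w : ℝ → ℝ} {a b : ℝ} (hab : a ≤ b)
    (hg : ContinuousOn g (Icc a b)) (hh : ContinuousOn h (Icc a b))
    (hw0 : ∀ t ∈ Icc a b, 0 ≤ w t) (hwi : IntervalIntegrable w volume a b)
    (hgh : ∀ t ∈ Icc a b, |g t| ≤ h t) :
    |∫ t in a..b, g t * w t| ≤ ∫ t in a..b, h t * w t := by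
  rw [← uIcc_of_le hab] at hg hh
  refine (abs_integral_le_integral_abs hab).trans <|
    integral_mono_on hab (hwi.continuousOn_mul hg).abs (hwi.continuousOn_mul hh) fun t ht => ?_
  rw [abs_mul, abs_of_nonneg (hw0 t ht)]
  exact mul_le_mul_of_nonneg_right (hgh t ht) (hw0 t ht)

theorem integral_abs_sub_mul_eq {w : ℝ → ℝ} {a b x : ℝ} (hwi : IntervalIntegrable w volume a b)
    (hx : x ∈ Icc a b) :
    ∫ t in a..b, |t - x| * w t =
      x * ((∫ t in a..x, w t) - ∫ t in x..b, w t) +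
        ((∫ t in x..b, t * w t) - ∫ t in a..x, t * w t) := by
  have hwax : IntervalIntegrable w volume a x :=
    hwi.mono_set (uIcc_subset_uIcc_left (Icc_subset_uIcc hx))
  have hwxb : IntervalIntegrable w volume x b :=
    hwi.mono_set (uIcc_subset_uIcc_right (Icc_subset_uIcc hx))
  have hleft : ∫ t in a..x, |t - x| * w t = ∫ t in a..x, (x * w t - t * w t) :=
    integral_congr fun t ht => by
      rw [uIcc_of_le hx.1] at ht
      rw [abs_of_nonpos (sub_nonpos.2 ht.2)]; ring
  have hright : ∫ t in x..b, |t - x| * w t = ∫ t in x..b, (t * w t - x * w t) :=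
    integral_congr fun t ht => by
      rw [uIcc_of_le hx.2] at ht
      rw [abs_of_nonneg (sub_nonneg.2 ht.1)]; ring
  have htwax : IntervalIntegrable (fun t => t * w t) volume a x :=
    hwax.continuousOn_mul continuousOn_id
  have htwxb : IntervalIntegrable (fun t => t * w t) volume x b :=
    hwxb.continuousOn_mul continuousOn_id
  have habs : Continuous fun t : ℝ => |t - x| := by fun_prop
  rw [← integral_add_adjacent_intervals (hwax.continuousOn_mul habs.continuousOn)
    (hwxb.continuousOn_mul habs.continuousOn), hleft, hright,
    integral_sub (hwax.const_mul x) htwax, integral_sub htwxb (hwxb.const_mul x),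
    intervalIntegral.integral_const_mul, intervalIntegral.integral_const_mul]
  ring

theorem ostrowski_pompeiu_weighted_general (a b : ℝ) (f w : ℝ → ℝ)
    (h0 : (0:ℝ) ∉ Set.Icc a b)
    (hf : ContinuousOn f (Set.Icc a b))
    (hd : DifferentiableOn ℝ f (Set.Ioo a b))
    (hw0 : ∀ t ∈ Set.Icc a b, 0 ≤ w t)
    (hwi : IntervalIntegrable w MeasureTheory.volume a b)
    (hbdd : BddAbove ((fun ξ => |f ξ - ξ * deriv f ξ|) '' Set.Ioo a b))
    (x : ℝ) (hx : x ∈ Set.Icc a b) :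
    |(∫ t in a..b, f t * w t) - f x / x * ∫ t in a..b, t * w t| ≤
      sSup ((fun ξ => |f ξ - ξ * deriv f ξ|) '' Set.Ioo a b) *
        (Real.sign x * ((∫ t in a..x, w t) - ∫ t in x..b, w t) +
          1 / |x| * ((∫ t in x..b, t * w t) - ∫ t in a..x, t * w t)) := by
  set M := sSup ((fun ξ => |f ξ - ξ * deriv f ξ|) '' Set.Ioo a b)
  have hx0 : x ≠ 0 := fun h => h0 (h ▸ hx)
  have hpointwise : ∀ t ∈ Icc a b, |f t - f x / x * t| ≤ M / |x| * |t - x| := fun t ht => by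
    rw [show f t - f x / x * t = (x * f t - t * f x) / x by field_simp, abs_div,
      div_mul_eq_mul_div, div_le_div_iff_of_pos_right (abs_pos.2 hx0)]
    exact abs_mul_sub_mul_le_of_abs_sub_mul_deriv_le h0 hf hd
      (fun ξ hξ => le_csSup hbdd (mem_image_of_mem _ hξ)) hx ht
  have hlhs : (∫ t in a..b, f t * w t) - f x / x * ∫ t in a..b, t * w t =
      ∫ t in a..b, (f t - f x / x * t) * w t := by
    rw [← uIcc_of_le (hx.1.trans hx.2)] at hf
    have htw : IntervalIntegrable (fun t => t * w t) volume a b :=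
      hwi.continuousOn_mul continuousOn_id
    simp_rw [sub_mul, mul_assoc]
    rw [integral_sub (hwi.continuousOn_mul hf) (htw.const_mul _),
      intervalIntegral.integral_const_mul]
  calc |(∫ t in a..b, f t * w t) - f x / x * ∫ t in a..b, t * w t|
      ≤ ∫ t in a..b, M / |x| * |t - x| * w t := by
        rw [hlhs]
        exact abs_integral_mul_le_integral_mul_of_abs_le (hx.1.trans hx.2) (by fun_prop)
          (by fun_prop) hw0 hwi hpointwise
    _ = M / |x| * ∫ t in a..b, |t - x| * w t := by
        simp_rw [mul_assoc, intervalIntegral.integral_const_mul]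
    _ = _ := by
        rw [integral_abs_sub_mul_eq hwi hx, Real.sign_eq_div_abs]
        ring

/-- Theorem 4.1: the weighted Ostrowski–Pompeiu inequality. -/
theorem ostrowski_pompeiu_weighted (a b : ℝ) (f w : ℝ → ℝ)
    (hab : a < b) (h0 : (0:ℝ) ∉ Set.Icc a b)
    (hf : ContinuousOn f (Set.Icc a b))
    (hd : DifferentiableOn ℝ f (Set.Ioo a b))
    (hw0 : ∀ t ∈ Set.Icc a b, 0 ≤ w t)
    (hwi : IntervalIntegrable w MeasureTheory.volume a b)
    (hbdd : BddAbove ((fun ξ => |f ξ - ξ * deriv f ξ|) '' Set.Ioo a b))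
    (x : ℝ) (hx : x ∈ Set.Icc a b) :
    |(∫ t in a..b, f t * w t) - f x / x * ∫ t in a..b, t * w t| ≤
      sSup ((fun ξ => |f ξ - ξ * deriv f ξ|) '' Set.Ioo a b) *
        (Real.sign x * ((∫ t in a..x, w t) - ∫ t in x..b, w t) +
          1 / |x| * ((∫ t in x..b, t * w t) - ∫ t in a..x, t * w t)) :=
  ostrowski_pompeiu_weighted_general a b f w h0 hf hd hw0 hwi hbdd x hx
end

section
/- Let f : [a,b] → ℝ be continuous on [a,b] and differentiable on (a,b), where the interval [a,b] does not contain 0. Then for all x, t ∈ [a,b], |t·f(x) − x·f(t)| ≤ ‖f − ℓf′‖∞ · |x − t|. -/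
/-- The key pointwise inequality (3.2) obtained from Pompeiu's mean value theorem. -/
theorem pompeiu_pointwise_inequality (a b : ℝ) (f : ℝ → ℝ)
    (hab : a < b) (h0 : (0:ℝ) ∉ Set.Icc a b)
    (hf : ContinuousOn f (Set.Icc a b))
    (hd : DifferentiableOn ℝ f (Set.Ioo a b))
    (hbdd : BddAbove ((fun ξ => |f ξ - ξ * deriv f ξ|) '' Set.Ioo a b))
    (x t : ℝ) (hx : x ∈ Set.Icc a b) (ht : t ∈ Set.Icc a b) :
    |t * f x - x * f t| ≤
      sSup ((fun ξ => |f ξ - ξ * deriv f ξ|) '' Set.Ioo a b) * |x - t| := by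
  set M := sSup ((fun ξ => |f ξ - ξ * deriv f ξ|) '' Set.Ioo a b) with hM
  have hne : ∀ u ∈ Set.Icc a b, u ≠ 0 := fun u hu h => h0 (h ▸ hu)
  have key : ∀ u v : ℝ, u ∈ Set.Icc a b → v ∈ Set.Icc a b → v < u →
      |v * f u - u * f v| ≤ M * |u - v| := by
    intro u v hu hv hvu
    have hu0 : u ≠ 0 := hne u hu
    have hv0 : v ≠ 0 := hne v hv
    have hIcc : Set.Icc v u ⊆ Set.Icc a b := Set.Icc_subset_Icc hv.1 hu.2
    have hIoo : Set.Ioo v u ⊆ Set.Ioo a b := Set.Ioo_subset_Ioo hv.1 hu.2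
    have hFc : ContinuousOn (fun y => f y / y) (Set.Icc v u) :=
      (hf.mono hIcc).div continuousOn_id (fun y hy => hne y (hIcc hy))
    have hGc : ContinuousOn (fun y : ℝ => y⁻¹) (Set.Icc v u) :=
      ContinuousOn.inv₀ continuousOn_id (fun y hy => hne y (hIcc hy))
    have hFd : ∀ c ∈ Set.Ioo v u, HasDerivAt (fun y => f y / y)
        ((deriv f c * c - f c * 1) / c ^ 2) c := by
      intro c hc
      have hc' := hIoo hc
      have hfc : HasDerivAt f (deriv f c) c :=
        ((hd c hc').differentiableAt (isOpen_Ioo.mem_nhds hc')).hasDerivAt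
      exact hfc.div (hasDerivAt_id c) (hne c (Set.Ioo_subset_Icc_self (hIoo hc)))
    have hGd : ∀ c ∈ Set.Ioo v u, HasDerivAt (fun y : ℝ => y⁻¹) (-(c ^ 2)⁻¹) c :=
      fun c hc => hasDerivAt_inv (hne c (Set.Ioo_subset_Icc_self (hIoo hc)))
    obtain ⟨c, hc, hceq⟩ := exists_ratio_hasDerivAt_eq_ratio_slope (fun y => f y / y)
      (fun c => (deriv f c * c - f c * 1) / c ^ 2) hvu hFc hFd
      (fun y : ℝ => y⁻¹) (fun c => -(c ^ 2)⁻¹) hGc hGd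
    have hc0 : c ≠ 0 := hne c (Set.Ioo_subset_Icc_self (hIoo hc))
    have E : v * f u - u * f v = (v - u) * (f c - c * deriv f c) := by
      field_simp at hceq
      nlinarith [hceq]
    have hcM : |f c - c * deriv f c| ≤ M :=
      le_csSup hbdd ⟨c, hIoo hc, rfl⟩
    calc |v * f u - u * f v| = |f c - c * deriv f c| * |u - v| := by
          rw [E, abs_mul, abs_sub_comm v u, mul_comm]
      _ ≤ M * |u - v| := mul_le_mul_of_nonneg_right hcM (abs_nonneg _)
  rcases lt_trichotomy t x with h | h | h
  · exact key x t hx ht h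
  · subst h
    simp [M]
  · have := key t x ht hx h
    rwa [abs_sub_comm x t, abs_sub_comm (t * f x)]
end

section
/- Let 0 < a < b and let p be a real number with p ∉ {−1, 0}. Then |A(a,b)ᵖ − L_p(a,b)ᵖ| ≤ (1/4)·(1−p)·aᵖ·(b−a)/A(a,b) if p < 0 and p ≠ −1, and |A(a,b)ᵖ − L_p(a,b)ᵖ| ≤ (1/4)·|1−p|·bᵖ·(b−a)/A(a,b) if p ∈ (0,1) ∪ (1,∞). -/
/-!
`L_p(a, b) ^ p` is the mean value of `x ↦ x ^ p` on `[a, b]`. By the Hermite–Hadamard inequality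
(proved by pairing `x` with its reflection `a + b - x`), this mean lies between `A ^ p` and
`(a ^ p + b ^ p) / 2`, so it suffices to bound the gap between these two. Writing
`a = A (1 - x)`, `b = A (1 + x)` reduces that gap to an inequality in `x` alone, which follows from
Bernoulli's inequality for the exponent `1 - p`.
-/

open Real Set MeasureTheory intervalIntegral

section HermiteHadamard

variable {f : ℝ → ℝ} {a b c : ℝ}

theorem integral_comp_reflect (f : ℝ → ℝ) (a b : ℝ) :
    ∫ x in a..b, f (a + b - x) = ∫ x in a..b, f x := by
  simp

theorem mul_le_integral_of_le_add_comp_reflect (hab : a ≤ b)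
    (hf : IntervalIntegrable f volume a b) (h : ∀ x ∈ Icc a b, 2 * c ≤ f x + f (a + b - x)) :
    (b - a) * c ≤ ∫ x in a..b, f x := by
  have hf' : IntervalIntegrable (fun x ↦ f (a + b - x)) volume a b := by
    simpa using (hf.comp_sub_left (a + b)).symm
  have := integral_mono_on hab intervalIntegrable_const (hf.add hf') h
  rw [intervalIntegral.integral_const, smul_eq_mul, integral_add hf hf',
    integral_comp_reflect] at this
  linarith

theorem integral_le_mul_of_add_comp_reflect_le (hab : a ≤ b)
    (hf : IntervalIntegrable f volume a b) (h : ∀ x ∈ Icc a b, f x + f (a + b - x) ≤ 2 * c) :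
    ∫ x in a..b, f x ≤ (b - a) * c := by
  have := mul_le_integral_of_le_add_comp_reflect (f := fun x ↦ -f x) (c := -c) hab hf.neg
    fun x hx ↦ by linarith [h x hx]
  rw [intervalIntegral.integral_neg] at this
  linarith

theorem ConvexOn.two_mul_apply_midpoint_le_add_apply_reflect (hf : ConvexOn ℝ (Icc a b) f)
    {x : ℝ} (hx : x ∈ Icc a b) : 2 * f ((a + b) / 2) ≤ f x + f (a + b - x) := by
  have hx' : a + b - x ∈ Icc a b := ⟨by linarith [hx.2], by linarith [hx.1]⟩
  have h := hf.2 hx hx' (by norm_num : (0 : ℝ) ≤ 1 / 2) (by norm_num : (0 : ℝ) ≤ 1 / 2)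
    (by norm_num)
  simp only [smul_eq_mul] at h
  rw [show 1 / 2 * x + 1 / 2 * (a + b - x) = (a + b) / 2 by ring] at h
  linarith

theorem ConvexOn.add_apply_reflect_le (hf : ConvexOn ℝ (Icc a b) f) {x : ℝ}
    (hx : x ∈ Icc a b) : f x + f (a + b - x) ≤ f a + f b := by
  obtain ⟨hax, hxb⟩ := hx
  rcases (hax.trans hxb).eq_or_lt with rfl | hab
  · obtain rfl := le_antisymm hxb hax
    simp
  have hba : b - a ≠ 0 := (sub_pos.2 hab).ne'
  have hw₁ : 0 ≤ (b - x) / (b - a) := div_nonneg (by linarith) (by linarith)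
  have hw₂ : 0 ≤ (x - a) / (b - a) := div_nonneg (by linarith) (by linarith)
  have hw : (b - x) / (b - a) + (x - a) / (b - a) = 1 := by field_simp; ring
  have ha := left_mem_Icc.2 hab.le
  have hb := right_mem_Icc.2 hab.le
  have h₁ := hf.2 ha hb hw₁ hw₂ hw
  have h₂ := hf.2 ha hb hw₂ hw₁ ((add_comm _ _).trans hw)
  simp only [smul_eq_mul] at h₁ h₂
  rw [show (b - x) / (b - a) * a + (x - a) / (b - a) * b = x by field_simp; ring] at h₁
  rw [show (x - a) / (b - a) * a + (b - x) / (b - a) * b = a + b - x by field_simp; ring] at h₂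
  linear_combination h₁ + h₂ + (f a + f b) * hw

theorem ConvexOn.mul_apply_midpoint_le_integral (hf : ConvexOn ℝ (Icc a b) f)
    (hfi : IntervalIntegrable f volume a b) (hab : a ≤ b) :
    (b - a) * f ((a + b) / 2) ≤ ∫ x in a..b, f x :=
  mul_le_integral_of_le_add_comp_reflect hab hfi fun _ hx ↦
    hf.two_mul_apply_midpoint_le_add_apply_reflect hx

theorem ConvexOn.integral_le_mul_add_div_two (hf : ConvexOn ℝ (Icc a b) f)
    (hfi : IntervalIntegrable f volume a b) (hab : a ≤ b) :
    ∫ x in a..b, f x ≤ (b - a) * ((f a + f b) / 2) :=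
  integral_le_mul_of_add_comp_reflect_le hab hfi fun _ hx ↦ by
    linarith [hf.add_apply_reflect_le hx]

theorem ConvexOn.abs_apply_midpoint_sub_average_le (hf : ConvexOn ℝ (Icc a b) f)
    (hfi : IntervalIntegrable f volume a b) (hab : a < b) :
    |f ((a + b) / 2) - (∫ x in a..b, f x) / (b - a)| ≤ (f a + f b) / 2 - f ((a + b) / 2) := by
  have hba : 0 < b - a := sub_pos.2 hab
  have hlow : f ((a + b) / 2) ≤ (∫ x in a..b, f x) / (b - a) := by
    rw [le_div_iff₀' hba]; exact hf.mul_apply_midpoint_le_integral hfi hab.le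
  have hupp : (∫ x in a..b, f x) / (b - a) ≤ (f a + f b) / 2 := by
    rw [div_le_iff₀' hba]; exact hf.integral_le_mul_add_div_two hfi hab.le
  rw [abs_sub_comm, abs_of_nonneg (sub_nonneg.2 hlow)]
  linarith

theorem ConcaveOn.abs_apply_midpoint_sub_average_le (hf : ConcaveOn ℝ (Icc a b) f)
    (hfi : IntervalIntegrable f volume a b) (hab : a < b) :
    |f ((a + b) / 2) - (∫ x in a..b, f x) / (b - a)| ≤ f ((a + b) / 2) - (f a + f b) / 2 := by
  have h := hf.neg.abs_apply_midpoint_sub_average_le hfi.neg hab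
  simp only [Pi.neg_apply, intervalIntegral.integral_neg] at h
  rw [show -f ((a + b) / 2) - -(∫ x in a..b, f x) / (b - a)
    = -(f ((a + b) / 2) - (∫ x in a..b, f x) / (b - a)) by ring, abs_neg] at h
  linarith

end HermiteHadamard

theorem convexOn_rpow_of_nonpos {p : ℝ} (hp : p ≤ 0) : ConvexOn ℝ (Ioi 0) fun x : ℝ ↦ x ^ p := by
  have hlog : ConvexOn ℝ (Ioi 0) fun x ↦ p * log x :=
    (strictConcaveOn_log_Ioi.concaveOn.smul (neg_nonneg.2 hp)).neg.congr fun x _ ↦ by simp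
  refine ⟨convex_Ioi 0, fun x hx y hy α β hα hβ hαβ ↦ ?_⟩
  have hxy : 0 < α • x + β • y := (convex_Ioi 0) hx hy hα hβ hαβ
  calc (α • x + β • y) ^ p = exp (p * log (α • x + β • y)) := by
        rw [rpow_def_of_pos hxy, mul_comm]
    _ ≤ exp (α • (p * log x) + β • (p * log y)) := exp_le_exp.2 (hlog.2 hx hy hα hβ hαβ)
    _ ≤ α • exp (p * log x) + β • exp (p * log y) := convexOn_exp.2 trivial trivial hα hβ hαβ
    _ = α • x ^ p + β • y ^ p := by
      rw [rpow_def_of_pos hx, rpow_def_of_pos hy, mul_comm p, mul_comm p]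

theorem one_add_mul_self_le_rpow_one_add_of_nonpos {s : ℝ} (hs : -1 < s) {p : ℝ} (hp : p ≤ 0) :
    1 + p * s ≤ (1 + s) ^ p := by
  have h1s : 0 < 1 + s := by linarith
  calc 1 + p * s ≤ 1 + p * log (1 + s) := by nlinarith [log_le_sub_one_of_pos h1s]
    _ ≤ exp (log (1 + s) * p) := by linarith [add_one_le_exp (log (1 + s) * p)]
    _ = (1 + s) ^ p := (rpow_def_of_pos h1s p).symm

theorem rpow_mul_rpow_one_sub {x : ℝ} (hx : 0 < x) (p : ℝ) : x ^ p * x ^ (1 - p) = x := by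
  rw [← rpow_add hx, add_sub_cancel, rpow_one]

section Bounds

variable {p x : ℝ}

theorem add_rpow_one_sub_one_add_div_two_sub_one_le_of_neg (hp : p < 0) (hx₀ : 0 ≤ x)
    (hx₁ : x < 1) : ((1 - x) ^ p + (1 + x) ^ p) / 2 - 1 ≤ (1 - p) / 2 * x * (1 - x) ^ p := by
  have hx : 0 < 1 - x := by linarith
  have hB : 1 + (1 - p) * -x ≤ (1 - x) ^ (1 - p) := by
    simpa [sub_eq_add_neg] using one_add_mul_self_le_rpow_one_add (s := -x) (by linarith)
      (by linarith : 1 ≤ 1 - p)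
  have hright : (1 + x) ^ p ≤ 1 := rpow_le_one_of_one_le_of_nonpos (by linarith) hp.le
  have hleft : (1 - x) ^ p * (1 + (1 - p) * -x) ≤ 1 - x := by
    calc _ ≤ (1 - x) ^ p * (1 - x) ^ (1 - p) :=
          mul_le_mul_of_nonneg_left hB (rpow_nonneg hx.le p)
      _ = 1 - x := rpow_mul_rpow_one_sub hx p
  nlinarith

theorem one_sub_add_rpow_one_sub_one_add_div_two_le_of_lt_one (hp₀ : 0 < p) (hp₁ : p < 1)
    (hx₀ : 0 ≤ x) (hx₁ : x < 1) :
    1 - ((1 - x) ^ p + (1 + x) ^ p) / 2 ≤ (1 - p) / 2 * x * (1 + x) ^ p := by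
  have hx : 0 < 1 + x := by linarith
  have hleft : 1 - x ≤ (1 - x) ^ p := by
    simpa using rpow_le_rpow_of_exponent_ge (by linarith : 0 < 1 - x) (by linarith) hp₁.le
  have hB : (1 + x) ^ (1 - p) ≤ 1 + (1 - p) * x :=
    rpow_one_add_le_one_add_mul_self (by linarith) (by linarith) (by linarith)
  have hright : 1 + x ≤ (1 + x) ^ p * (1 + (1 - p) * x) := by
    calc 1 + x = (1 + x) ^ p * (1 + x) ^ (1 - p) := (rpow_mul_rpow_one_sub hx p).symm
      _ ≤ _ := mul_le_mul_of_nonneg_left hB (rpow_nonneg hx.le p)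
  nlinarith

theorem add_rpow_one_sub_one_add_div_two_sub_one_le_of_one_lt (hp : 1 < p) (hx₀ : 0 ≤ x)
    (hx₁ : x < 1) : ((1 - x) ^ p + (1 + x) ^ p) / 2 - 1 ≤ (p - 1) / 2 * x * (1 + x) ^ p := by
  have hx : 0 < 1 + x := by linarith
  have hleft : (1 - x) ^ p ≤ 1 - x := by
    simpa using rpow_le_rpow_of_exponent_ge (by linarith : 0 < 1 - x) (by linarith) hp.le
  have hB : 1 + (1 - p) * x ≤ (1 + x) ^ (1 - p) :=
    one_add_mul_self_le_rpow_one_add_of_nonpos (by linarith) (by linarith)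
  have hright : (1 + x) ^ p * (1 + (1 - p) * x) ≤ 1 + x := by
    calc _ ≤ (1 + x) ^ p * (1 + x) ^ (1 - p) :=
          mul_le_mul_of_nonneg_left hB (rpow_nonneg hx.le p)
      _ = 1 + x := rpow_mul_rpow_one_sub hx p
  nlinarith

end Bounds

section Homogeneous

variable {a b p : ℝ}

theorem exists_eq_mul_one_sub_and_eq_mul_one_add (ha : 0 < a) (hab : a < b) :
    ∃ m x : ℝ, 0 < m ∧ 0 ≤ x ∧ x < 1 ∧ a = m * (1 - x) ∧ b = m * (1 + x) := by
  have hab' : 0 < a + b := by linarith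
  refine ⟨(a + b) / 2, (b - a) / (a + b), by positivity, div_nonneg (by linarith) hab'.le,
    (div_lt_one hab').2 (by linarith), ?_, ?_⟩ <;> field_simp <;> ring

theorem add_rpow_div_two_sub_rpow_midpoint_le_of_neg (ha : 0 < a) (hab : a < b) (hp : p < 0) :
    (a ^ p + b ^ p) / 2 - ((a + b) / 2) ^ p ≤
      1 / 4 * ((1 - p) * a ^ p * (b - a) / ((a + b) / 2)) := by
  obtain ⟨m, x, hm, hx₀, hx₁, rfl, rfl⟩ := exists_eq_mul_one_sub_and_eq_mul_one_add ha hab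
  have key := mul_le_mul_of_nonneg_left
    (add_rpow_one_sub_one_add_div_two_sub_one_le_of_neg hp hx₀ hx₁) (rpow_nonneg hm.le p)
  rw [mul_rpow hm.le (by linarith), mul_rpow hm.le (by linarith),
    show (m * (1 - x) + m * (1 + x)) / 2 = m by ring]
  refine (Eq.le (by ring)).trans (key.trans (Eq.le ?_))
  field_simp
  ring

theorem rpow_midpoint_sub_add_rpow_div_two_le_of_lt_one (ha : 0 < a) (hab : a < b) (hp₀ : 0 < p)
    (hp₁ : p < 1) :
    ((a + b) / 2) ^ p - (a ^ p + b ^ p) / 2 ≤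
      1 / 4 * ((1 - p) * b ^ p * (b - a) / ((a + b) / 2)) := by
  obtain ⟨m, x, hm, hx₀, hx₁, rfl, rfl⟩ := exists_eq_mul_one_sub_and_eq_mul_one_add ha hab
  have key := mul_le_mul_of_nonneg_left
    (one_sub_add_rpow_one_sub_one_add_div_two_le_of_lt_one hp₀ hp₁ hx₀ hx₁) (rpow_nonneg hm.le p)
  rw [mul_rpow hm.le (by linarith), mul_rpow hm.le (by linarith),
    show (m * (1 - x) + m * (1 + x)) / 2 = m by ring]
  refine (Eq.le (by ring)).trans (key.trans (Eq.le ?_))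
  field_simp
  ring

theorem add_rpow_div_two_sub_rpow_midpoint_le_of_one_lt (ha : 0 < a) (hab : a < b) (hp : 1 < p) :
    (a ^ p + b ^ p) / 2 - ((a + b) / 2) ^ p ≤
      1 / 4 * ((p - 1) * b ^ p * (b - a) / ((a + b) / 2)) := by
  obtain ⟨m, x, hm, hx₀, hx₁, rfl, rfl⟩ := exists_eq_mul_one_sub_and_eq_mul_one_add ha hab
  have key := mul_le_mul_of_nonneg_left
    (add_rpow_one_sub_one_add_div_two_sub_one_le_of_one_lt hp hx₀ hx₁) (rpow_nonneg hm.le p)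
  rw [mul_rpow hm.le (by linarith), mul_rpow hm.le (by linarith),
    show (m * (1 - x) + m * (1 + x)) / 2 = m by ring]
  refine (Eq.le (by ring)).trans (key.trans (Eq.le ?_))
  field_simp
  ring

end Homogeneous

theorem arith_plog_mean_inequality_general (a b p : ℝ) (ha : 0 < a) (hab : a < b)
    (hp1 : p ≠ -1) :
    (p < 0 →
      |((a + b) / 2) ^ p - (b ^ (p + 1) - a ^ (p + 1)) / ((p + 1) * (b - a))| ≤
        1 / 4 * ((1 - p) * a ^ p * (b - a) / ((a + b) / 2))) ∧
    (0 < p → p ≠ 1 →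
      |((a + b) / 2) ^ p - (b ^ (p + 1) - a ^ (p + 1)) / ((p + 1) * (b - a))| ≤
        1 / 4 * (|1 - p| * b ^ p * (b - a) / ((a + b) / 2))) := by
  have h0 : (0 : ℝ) ∉ uIcc a b := notMem_uIcc_of_lt ha (ha.trans hab)
  have hpos : Icc a b ⊆ Ioi 0 := fun x hx ↦ ha.trans_le hx.1
  have hint : IntervalIntegrable (fun x : ℝ ↦ x ^ p) volume a b :=
    intervalIntegrable_rpow (Or.inr h0)
  rw [← div_div, ← integral_rpow (Or.inr ⟨hp1, h0⟩)]
  refine ⟨fun hp ↦ ?_, fun hp₀ hp₁ ↦ ?_⟩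
  · exact (((convexOn_rpow_of_nonpos hp.le).subset hpos
      (convex_Icc a b)).abs_apply_midpoint_sub_average_le hint hab).trans
      (add_rpow_div_two_sub_rpow_midpoint_le_of_neg ha hab hp)
  rcases hp₁.lt_or_gt with hp₁ | hp₁
  · rw [abs_of_pos (sub_pos.2 hp₁)]
    exact (((concaveOn_rpow hp₀.le hp₁.le).subset (hpos.trans Ioi_subset_Ici_self)
      (convex_Icc a b)).abs_apply_midpoint_sub_average_le hint hab).trans
      (rpow_midpoint_sub_add_rpow_div_two_le_of_lt_one ha hab hp₀ hp₁)
  · rw [abs_sub_comm 1 p, abs_of_pos (sub_pos.2 hp₁)]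
    exact (((convexOn_rpow hp₁.le).subset (hpos.trans Ioi_subset_Ici_self)
      (convex_Icc a b)).abs_apply_midpoint_sub_average_le hint hab).trans
      (add_rpow_div_two_sub_rpow_midpoint_le_of_one_lt ha hab hp₁)

/-- Inequality (6.2): bounds for the difference between powers of the arithmetic mean
and the `p`-logarithmic mean. -/
theorem arith_plog_mean_inequality (a b p : ℝ) (ha : 0 < a) (hab : a < b)
    (hp1 : p ≠ -1) (hp0 : p ≠ 0) :
    (p < 0 →
      |((a + b) / 2) ^ p - (b ^ (p + 1) - a ^ (p + 1)) / ((p + 1) * (b - a))| ≤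
        1 / 4 * ((1 - p) * a ^ p * (b - a) / ((a + b) / 2))) ∧
    (0 < p → p ≠ 1 →
      |((a + b) / 2) ^ p - (b ^ (p + 1) - a ^ (p + 1)) / ((p + 1) * (b - a))| ≤
        1 / 4 * (|1 - p| * b ^ p * (b - a) / ((a + b) / 2))) :=
  arith_plog_mean_inequality_general a b p ha hab hp1
end

section
/- Let 0 < a < b. Then 0 ≤ A(a,b) − L(a,b) ≤ ((b−a)/(2a))·L(a,b). -/
/-!
With `x = (b - a) / (a + b)` one has `log b - log a = log (1 + x) - log (1 - x)
= 2 (x + x³/3 + x⁵/5 + ⋯)`, and keeping only the first term gives `L ≤ A`. For the upper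
bound, `log t ≤ t - 1` at `t = b / a` gives `a (log b - log a) ≤ b - a`, i.e. `a ≤ L`, and
then `A - L = (b - a) / 2 - (L - a) ≤ (b - a) / 2 ≤ (b - a) / (2a) · L`.
-/

open Real

theorem two_mul_sub_div_add_le_log_sub_log {a b : ℝ} (ha : 0 < a) (hab : a ≤ b) :
    2 * (b - a) / (a + b) ≤ log b - log a := by
  have hb : 0 < b := ha.trans_le hab
  set x := (b - a) / (a + b) with hx_def
  have hx : 0 ≤ x := div_nonneg (sub_nonneg.mpr hab) (by positivity)
  have hx1 : |x| < 1 := by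
    rw [abs_of_nonneg hx, div_lt_one (by positivity)]
    linarith
  have hquot : (1 + x) / (1 - x) = b / a := by
    have hsum : a + b ≠ 0 := by positivity
    rw [show 1 + x = 2 * b / (a + b) by rw [hx_def]; field_simp; ring,
      show 1 - x = 2 * a / (a + b) by rw [hx_def]; field_simp; ring]
    field_simp
  have hseries := hasSum_log_sub_log_of_abs_lt_one hx1
  rw [← log_div (by linarith [le_abs_self x]) (by linarith [le_abs_self x]), hquot,
    log_div hb.ne' ha.ne'] at hseries
  have hfirst := le_hasSum hseries 0 fun k _ ↦ by positivity
  simpa [x, mul_div_assoc] using hfirst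

theorem mul_log_sub_log_le_sub {a b : ℝ} (ha : 0 < a) (hb : 0 < b) :
    a * (log b - log a) ≤ b - a := by
  have h := mul_le_mul_of_nonneg_left (log_le_sub_one_of_pos (div_pos hb ha)) ha.le
  rwa [log_div hb.ne' ha.ne', mul_sub_one, mul_div_cancel₀ _ ha.ne'] at h

/-- Inequality (6.3): bounds for the difference between the arithmetic and
logarithmic means. -/
theorem arith_log_mean_inequality (a b : ℝ) (ha : 0 < a) (hab : a < b) :
    0 ≤ (a + b) / 2 - (b - a) / (Real.log b - Real.log a) ∧
      (a + b) / 2 - (b - a) / (Real.log b - Real.log a) ≤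
        (b - a) / (2 * a) * ((b - a) / (Real.log b - Real.log a)) := by
  have hℓ : 0 < log b - log a := sub_pos.mpr (log_lt_log ha hab)
  set L := (b - a) / (log b - log a)
  have hLA : L ≤ (a + b) / 2 := by
    have h := two_mul_sub_div_add_le_log_sub_log ha hab.le
    rw [div_le_iff₀ (by linarith)] at h
    rw [div_le_iff₀ hℓ]
    linarith
  have haL : a ≤ L := (le_div_iff₀ hℓ).mpr (mul_log_sub_log_le_sub ha (ha.trans hab))
  refine ⟨sub_nonneg.mpr hLA, ?_⟩
  calc (a + b) / 2 - L = (b - a) / 2 - (L - a) := by ring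
    _ ≤ (b - a) / 2 := by linarith
    _ = (b - a) / (2 * a) * a := by field_simp
    _ ≤ (b - a) / (2 * a) * L := by gcongr
end

section
/- Let 0 < a < b. Then 1 ≤ A(a,b)/I(a,b) ≤ exp{ ((b−a)/(4·A(a,b)))·max(|ln(a/e)|, |ln(b/e)|) }. -/
/-!
Put `A = (a + b) / 2` and `k = (b - a) / (a + b) ∈ (0, 1)`, so that `a = A (1 - k)` and
`b = A (1 + k)`. Then `log (A / I(a, b)) = 1 - φ(k) / (2k)` with
`φ(k) = (1 + k) log (1 + k) - (1 - k) log (1 - k)`, and both bounds become inequalities in the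
single variable `k`: `φ(k) ≤ 2k` (since `φ'(k) - 2 = log (1 - k²) ≤ 0`), and
`2k - φ(k) ≤ k² / 2 · log ((1 + k) / (1 - k))`, whose difference has derivative
`(1 + k) log (1 + k) + (1 - k) log (1 - k) + k² / (1 - k²) ≥ 0` because `x log x ≥ x - 1`.
Finally `log ((1 + k) / (1 - k)) = log (b / e) - log (a / e)` is at most twice the maximum of the
absolute values.
-/

open Real Set

lemma le_of_hasDerivAt_nonneg {f f' : ℝ → ℝ} {a b : ℝ} (hab : a ≤ b)
    (hf : ∀ x ∈ Icc a b, HasDerivAt f (f' x) x) (hf' : ∀ x ∈ Ioo a b, 0 ≤ f' x) :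
    f a ≤ f b := by
  refine monotoneOn_of_hasDerivWithinAt_nonneg (f' := f') (convex_Icc a b)
    (fun x hx ↦ (hf x hx).continuousAt.continuousWithinAt) ?_ ?_
    (left_mem_Icc.2 hab) (right_mem_Icc.2 hab) hab
  · rw [interior_Icc]
    exact fun x hx ↦ (hf x (Ioo_subset_Icc_self hx)).hasDerivWithinAt
  · rwa [interior_Icc]

lemma hasDerivAt_one_add_mul_log {x : ℝ} (hx : -1 < x) :
    HasDerivAt (fun k ↦ (1 + k) * log (1 + k)) (log (1 + x) + 1) x := by
  simpa [Function.comp_def] using (hasDerivAt_mul_log (by linarith : 1 + x ≠ 0)).comp x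
    ((hasDerivAt_id x).const_add 1)

lemma hasDerivAt_one_sub_mul_log {x : ℝ} (hx : x < 1) :
    HasDerivAt (fun k ↦ (1 - k) * log (1 - k)) (-(log (1 - x) + 1)) x := by
  simpa [Function.comp_def] using (hasDerivAt_mul_log (by linarith : 1 - x ≠ 0)).comp x
    ((hasDerivAt_id x).const_sub 1)

lemma one_add_mul_log_add_one_sub_mul_log_nonneg {k : ℝ} (hk₀ : -1 ≤ k) (hk₁ : k ≤ 1) :
    0 ≤ (1 + k) * log (1 + k) + (1 - k) * log (1 - k) := by
  linarith [self_sub_one_le_mul_log (by linarith : 0 ≤ 1 + k),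
    self_sub_one_le_mul_log (by linarith : 0 ≤ 1 - k)]

lemma one_add_mul_log_sub_one_sub_mul_log_le {k : ℝ} (hk₀ : 0 ≤ k) (hk₁ : k < 1) :
    (1 + k) * log (1 + k) - (1 - k) * log (1 - k) ≤ 2 * k := by
  have hmono := le_of_hasDerivAt_nonneg
    (f := fun k ↦ 2 * k - ((1 + k) * log (1 + k) - (1 - k) * log (1 - k)))
    (f' := fun x ↦ -log ((1 + x) * (1 - x))) hk₀ (fun x hx ↦ ?_) (fun x hx ↦ ?_)
  · simpa using hmono
  · have h₁ : 0 < 1 + x := by linarith [hx.1]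
    have h₂ : 0 < 1 - x := by linarith [hx.2, hk₁]
    refine (((hasDerivAt_id x).const_mul 2).sub ((hasDerivAt_one_add_mul_log (by linarith)).sub
      (hasDerivAt_one_sub_mul_log (by linarith)))).congr_deriv ?_
    rw [log_mul h₁.ne' h₂.ne']
    ring
  · exact neg_nonneg.2 (log_nonpos (by nlinarith [hx.1, hx.2]) (by nlinarith [hx.1]))

lemma two_mul_sub_le_sq_div_two_mul_log_sub_log {k : ℝ} (hk₀ : 0 ≤ k) (hk₁ : k < 1) :
    2 * k - ((1 + k) * log (1 + k) - (1 - k) * log (1 - k)) ≤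
      k ^ 2 / 2 * (log (1 + k) - log (1 - k)) := by
  have hmono := le_of_hasDerivAt_nonneg
    (f := fun k ↦ k ^ 2 / 2 * (log (1 + k) - log (1 - k)) -
      (2 * k - ((1 + k) * log (1 + k) - (1 - k) * log (1 - k))))
    (f' := fun x ↦ (1 + x) * log (1 + x) + (1 - x) * log (1 - x) +
      x ^ 2 / 2 * ((1 + x)⁻¹ + (1 - x)⁻¹)) hk₀ (fun x hx ↦ ?_) (fun x hx ↦ ?_)
  · simpa using hmono
  · have h₁ : 0 < 1 + x := by linarith [hx.1]
    have h₂ : 0 < 1 - x := by linarith [hx.2, hk₁]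
    have hlog : HasDerivAt (fun k ↦ log (1 + k) - log (1 - k)) ((1 + x)⁻¹ + (1 - x)⁻¹) x := by
      refine ((((hasDerivAt_id x).const_add 1).log h₁.ne').sub
        (((hasDerivAt_id x).const_sub 1).log h₂.ne')).congr_deriv ?_
      simp only [id]
      ring
    refine ((((hasDerivAt_pow 2 x).div_const 2).mul hlog).sub (((hasDerivAt_id x).const_mul 2).sub
      ((hasDerivAt_one_add_mul_log (by linarith)).sub
        (hasDerivAt_one_sub_mul_log (by linarith))))).congr_deriv ?_
    ring
  · have h₁ : 0 < 1 + x := by linarith [hx.1]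
    have h₂ : 0 < 1 - x := by linarith [hx.2]
    exact add_nonneg (one_add_mul_log_add_one_sub_mul_log_nonneg (by linarith) (by linarith))
      (by positivity)

noncomputable def identricMean (a b : ℝ) : ℝ := 1 / exp 1 * (b ^ b / a ^ a) ^ (1 / (b - a))

lemma log_identricMean {a b : ℝ} (ha : 0 < a) (hb : 0 < b) :
    log (identricMean a b) = (b * log b - a * log a) / (b - a) - 1 := by
  rw [identricMean, log_mul (by positivity) (by positivity), one_div, log_inv, log_exp,
    log_rpow (by positivity), log_div (by positivity) (by positivity), log_rpow hb, log_rpow ha]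
  ring

lemma identricMean_pos {a b : ℝ} (ha : 0 < a) (hb : 0 < b) : 0 < identricMean a b := by
  unfold identricMean
  positivity

lemma log_arith_div_identricMean {a b k : ℝ} (ha : 0 < a) (hb : 0 < b) (hab : a ≠ b)
    (hk : k = (b - a) / (a + b)) :
    log ((a + b) / 2 / identricMean a b) =
      1 - ((1 + k) * log (1 + k) - (1 - k) * log (1 - k)) / (2 * k) := by
  have hA : 0 < (a + b) / 2 := by positivity
  have hba : b - a ≠ 0 := sub_ne_zero.2 hab.symm
  have hlog_add : log (1 + k) = log b - log ((a + b) / 2) := by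
    rw [← log_div hb.ne' hA.ne', hk]
    congr 1
    field_simp
    ring
  have hlog_sub : log (1 - k) = log a - log ((a + b) / 2) := by
    rw [← log_div ha.ne' hA.ne', hk]
    congr 1
    field_simp
    ring
  rw [log_div hA.ne' (identricMean_pos ha hb).ne', log_identricMean ha hb, hlog_add, hlog_sub, hk]
  field_simp
  ring

lemma log_arith_div_identricMean_nonneg {a b : ℝ} (ha : 0 < a) (hab : a < b) :
    0 ≤ log ((a + b) / 2 / identricMean a b) := by
  have hk₀ : 0 < (b - a) / (a + b) := div_pos (by linarith) (by linarith)
  rw [log_arith_div_identricMean ha (ha.trans hab) hab.ne rfl, sub_nonneg,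
    div_le_one (by positivity)]
  exact one_add_mul_log_sub_one_sub_mul_log_le hk₀.le
    ((div_lt_one (by linarith)).2 (by linarith))

lemma log_arith_div_identricMean_le {a b : ℝ} (ha : 0 < a) (hab : a < b) :
    log ((a + b) / 2 / identricMean a b) ≤
      (b - a) / (4 * ((a + b) / 2)) * ((log b - log a) / 2) := by
  have hb : 0 < b := ha.trans hab
  set k := (b - a) / (a + b) with hk
  have hk₀ : 0 < k := div_pos (by linarith) (by linarith)
  have hk₁ : k < 1 := (div_lt_one (by linarith)).2 (by linarith)
  have hlog : log (1 + k) - log (1 - k) = log b - log a := by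
    rw [← log_div (by linarith) (by linarith), ← log_div hb.ne' ha.ne', hk]
    congr 1
    rw [div_eq_div_iff (by linarith) ha.ne']
    field_simp
    ring
  rw [log_arith_div_identricMean ha hb hab.ne hk, ← hlog]
  calc 1 - ((1 + k) * log (1 + k) - (1 - k) * log (1 - k)) / (2 * k)
      = (2 * k - ((1 + k) * log (1 + k) - (1 - k) * log (1 - k))) / (2 * k) := by
        field_simp
    _ ≤ k ^ 2 / 2 * (log (1 + k) - log (1 - k)) / (2 * k) := by
        gcongr
        exact two_mul_sub_le_sq_div_two_mul_log_sub_log hk₀.le hk₁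
    _ = (b - a) / (4 * ((a + b) / 2)) * ((log (1 + k) - log (1 - k)) / 2) := by
        rw [hk]
        field_simp
        ring

/-- Inequality (6.4): bounds for the ratio of the arithmetic and identric means. -/
theorem arith_identric_mean_inequality (a b : ℝ) (ha : 0 < a) (hab : a < b) :
    1 ≤ ((a + b) / 2) / (1 / Real.exp 1 * (b ^ b / a ^ a) ^ (1 / (b - a))) ∧
      ((a + b) / 2) / (1 / Real.exp 1 * (b ^ b / a ^ a) ^ (1 / (b - a))) ≤
        Real.exp ((b - a) / (4 * ((a + b) / 2)) *
          max |Real.log (a / Real.exp 1)| |Real.log (b / Real.exp 1)|) := by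
  show 1 ≤ (a + b) / 2 / identricMean a b ∧ (a + b) / 2 / identricMean a b ≤ _
  have hb : 0 < b := ha.trans hab
  have hratio : 0 < (a + b) / 2 / identricMean a b :=
    div_pos (by positivity) (identricMean_pos ha hb)
  refine ⟨(log_nonneg_iff hratio).1 (log_arith_div_identricMean_nonneg ha hab),
    (log_le_iff_le_exp hratio).1 ((log_arith_div_identricMean_le ha hab).trans ?_)⟩
  have hdiff : log b - log a = log (b / exp 1) - log (a / exp 1) := by
    rw [log_div hb.ne' (exp_pos 1).ne', log_div ha.ne' (exp_pos 1).ne']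
    ring
  gcongr
  rw [hdiff]
  linarith [neg_abs_le (log (a / exp 1)), le_abs_self (log (b / exp 1)),
    le_max_left |log (a / exp 1)| |log (b / exp 1)|,
    le_max_right |log (a / exp 1)| |log (b / exp 1)|]
end

section
/- Let f : [a,b] → ℝ be a differentiable mapping on (a,b), continuous on [a,b], with |f′(t)| ≤ M for all t ∈ (a,b). Then for all x ∈ [a,b], |f(x) − (1/(b−a))·∫ₐᵇ f(t) dt| ≤ [1/4 + ((x − (a+b)/2)/(b−a))²]·(b−a)·M. -/
open Set intervalIntegral

lemma ostrowski_lip (a b M : ℝ) (f : ℝ → ℝ)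
    (hf : ContinuousOn f (Set.Icc a b))
    (hd : DifferentiableOn ℝ f (Set.Ioo a b))
    (hM : ∀ t ∈ Set.Ioo a b, |deriv f t| ≤ M)
    (hM0 : 0 ≤ M) :
    ∀ u ∈ Set.Icc a b, ∀ v ∈ Set.Icc a b, |f v - f u| ≤ M * |v - u| := by
  have key : ∀ u ∈ Set.Icc a b, ∀ v ∈ Set.Icc a b, u < v → |f v - f u| ≤ M * |v - u| := by
    intro u hu v hv huv
    obtain ⟨c, hc, hcs⟩ := exists_deriv_eq_slope f huv
      (hf.mono (Set.Icc_subset_Icc hu.1 hv.2))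
      (hd.mono (Set.Ioo_subset_Ioo hu.1 hv.2))
    have hcab : c ∈ Set.Ioo a b := ⟨lt_of_le_of_lt hu.1 hc.1, lt_of_lt_of_le hc.2 hv.2⟩
    have hvu : v - u ≠ 0 := sub_ne_zero.mpr huv.ne'
    have : f v - f u = deriv f c * (v - u) := by
      rw [hcs]; field_simp
    rw [this, abs_mul]
    exact mul_le_mul_of_nonneg_right (hM c hcab) (abs_nonneg _)
  intro u hu v hv
  rcases lt_trichotomy u v with h | h | h
  · exact key u hu v hv h
  · simp [h, hM0]
  · have := key v hv u hu h
    rwa [abs_sub_comm (f u), abs_sub_comm u] at this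

/-- Ostrowski's inequality. -/
theorem ostrowski_inequality (a b M : ℝ) (f : ℝ → ℝ) (hab : a < b)
    (hf : ContinuousOn f (Set.Icc a b))
    (hd : DifferentiableOn ℝ f (Set.Ioo a b))
    (hM : ∀ t ∈ Set.Ioo a b, |deriv f t| ≤ M)
    (x : ℝ) (hx : x ∈ Set.Icc a b) :
    |f x - (1 / (b - a)) * ∫ t in a..b, f t| ≤
      (1 / 4 + ((x - (a + b) / 2) / (b - a)) ^ 2) * (b - a) * M := by
  have hba : (0:ℝ) < b - a := by linarith
  have hM0 : 0 ≤ M := le_trans (abs_nonneg _)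
    (hM ((a+b)/2) ⟨by linarith, by linarith⟩)
  have hlip := ostrowski_lip a b M f hf hd hM hM0
  have hfi : IntervalIntegrable f MeasureTheory.volume a b := by
    apply ContinuousOn.intervalIntegrable
    rwa [Set.uIcc_of_le hab.le]
  -- integrability of comparison functions
  have hgi : IntervalIntegrable (fun t => |f x - f t|) MeasureTheory.volume a b := by
    apply ContinuousOn.intervalIntegrable
    rw [Set.uIcc_of_le hab.le]
    exact (continuousOn_const.sub hf).abs
  have hhi : IntervalIntegrable (fun t => M * |x - t|) MeasureTheory.volume a b := by
    apply ContinuousOn.intervalIntegrable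
    exact Continuous.continuousOn (by continuity)
  -- pointwise bound
  have hpt : ∀ t ∈ Set.Icc a b, |f x - f t| ≤ M * |x - t| :=
    fun t ht => hlip t ht x hx
  -- rewrite LHS
  have hrw : f x - (1 / (b - a)) * ∫ t in a..b, f t
      = (1 / (b - a)) * ∫ t in a..b, (f x - f t) := by
    rw [intervalIntegral.integral_sub intervalIntegrable_const hfi,
      intervalIntegral.integral_const]
    field_simp
    ring
  rw [hrw, abs_mul, abs_of_pos (by positivity : (0:ℝ) < 1/(b-a))]
  have h1 : |∫ t in a..b, (f x - f t)| ≤ ∫ t in a..b, |f x - f t| := by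
    have := intervalIntegral.abs_integral_le_integral_abs (f := fun t => f x - f t) (μ := MeasureTheory.volume) hab.le
    exact this
  have h2 : (∫ t in a..b, |f x - f t|) ≤ ∫ t in a..b, M * |x - t| := by
    apply intervalIntegral.integral_mono_on hab.le hgi hhi
    exact hpt
  have h3 : (∫ t in a..b, M * |x - t|) = M * (((x-a)^2 + (b-x)^2)/2) := by
    rw [intervalIntegral.integral_const_mul]
    congr 1
    have hsplit : (∫ t in a..x, |x - t|) + (∫ t in x..b, |x - t|) = ∫ t in a..b, |x - t| :=
      intervalIntegral.integral_add_adjacent_intervals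
        (ContinuousOn.intervalIntegrable (Continuous.continuousOn (by continuity)))
        (ContinuousOn.intervalIntegrable (Continuous.continuousOn (by continuity)))
    have e1 : (∫ t in a..x, |x - t|) = (x-a)^2/2 := by
      rw [intervalIntegral.integral_congr (g := fun t => x - t)]
      · rw [intervalIntegral.integral_sub intervalIntegrable_const
          (intervalIntegral.intervalIntegrable_id),
          intervalIntegral.integral_const, integral_id]
        simp [smul_eq_mul]; ring
      · intro t ht
        rw [Set.uIcc_of_le hx.1] at ht
        exact abs_of_nonneg (by linarith [ht.2])
    have e2 : (∫ t in x..b, |x - t|) = (b-x)^2/2 := by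
      rw [intervalIntegral.integral_congr (g := fun t => t - x)]
      · rw [intervalIntegral.integral_sub intervalIntegral.intervalIntegrable_id
          intervalIntegrable_const,
          intervalIntegral.integral_const, integral_id]
        simp [smul_eq_mul]; ring
      · intro t ht
        rw [Set.uIcc_of_le hx.2] at ht
        show |x - t| = t - x
        rw [abs_sub_comm]
        exact abs_of_nonneg (by linarith [ht.1])
    rw [← hsplit, e1, e2]
    ring
  have hle : 1/(b-a) * |∫ t in a..b, (f x - f t)|
      ≤ 1/(b-a) * (M * (((x-a)^2 + (b-x)^2)/2)) := by
    apply mul_le_mul_of_nonneg_left _ (by positivity)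
    calc |∫ t in a..b, (f x - f t)| ≤ ∫ t in a..b, |f x - f t| := h1
      _ ≤ ∫ t in a..b, M * |x - t| := h2
      _ = M * (((x-a)^2 + (b-x)^2)/2) := h3
  refine hle.trans (le_of_eq ?_)
  field_simp
  ring
end

section
/- Let f : [a,b] → ℝ be continuous on [a,b] with a > 0 and differentiable on (a,b). Let p ∈ ℝ \ {0} and assume K_p(f′) := sup over u ∈ (a,b) of u^{1−p}·|f′(u)| is finite. Then for any x ∈ (a,b), |f(x) − (1/(b−a))·∫ₐᵇ f(t) dt| ≤ (K_p(f′)/(|p|(b−a))) · E_p(x), where E_p(x) = 2xᵖ(x − A) + (b−x)·L_pᵖ(b,x) − (x−a)·L_pᵖ(x,a) if p ∈ (0,∞); E_p(x) = (x−a)·L_pᵖ(x,a) − (b−x)·L_pᵖ(b,x) − 2xᵖ(x − A) if p ∈ (−∞,−1) ∪ (−1,0); and E_{−1}(x) = (x−a)·L^{−1}(x,a) − (b−x)·L^{−1}(b,x) − (2/x)(x − A) if p = −1. -/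
/-!
The bound `|f'(u)| ≤ K u^(p-1)` says that `g(u) = (K/p) u^p` dominates the increments of `f`:
`|f t - f s| ≤ g t - g s` for `s ≤ t`, because `g - f` and `g + f` are nondecreasing. Writing
`f x` minus the mean of `f` as the mean of `f x - f t` and splitting the integral at `x`, the error
is at most `((x - a) g x - ∫ₐˣ g + ∫ₓᵇ g - (b - x) g x) / (b - a)`, and the integrals of `u^p`
are the `p`-logarithmic (for `p = -1` the logarithmic) means.
-/

open Set intervalIntegral

theorem abs_sub_le_sub_of_abs_deriv_le {f g g' : ℝ → ℝ} {a b : ℝ}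
    (hf : ContinuousOn f (Icc a b)) (hd : DifferentiableOn ℝ f (Ioo a b))
    (hg : ContinuousOn g (Icc a b)) (hg' : ∀ u ∈ Ioo a b, HasDerivAt g (g' u) u)
    (hfg : ∀ u ∈ Ioo a b, |deriv f u| ≤ g' u)
    {s t : ℝ} (hs : s ∈ Icc a b) (ht : t ∈ Icc a b) (hst : s ≤ t) :
    |f t - f s| ≤ g t - g s := by
  have mono : ∀ c : ℝ, |c| = 1 → MonotoneOn (fun u => g u - c * f u) (Icc a b) := by
    intro c hc
    refine monotoneOn_of_hasDerivWithinAt_nonneg (convex_Icc a b) (hg.sub (hf.const_smul c))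
      (f' := fun u => g' u - c * deriv f u) (fun u hu => ?_) (fun u hu => ?_)
    · rw [interior_Icc] at hu ⊢
      have hfu := (hd.differentiableAt (isOpen_Ioo.mem_nhds hu)).hasDerivAt
      exact ((hg' u hu).sub (hfu.const_mul c)).hasDerivWithinAt
    · rw [interior_Icc] at hu
      have : c * deriv f u ≤ |deriv f u| := by
        simpa [abs_mul, hc] using le_abs_self (c * deriv f u)
      linarith [hfg u hu]
  have h₁ := mono 1 (by norm_num) hs ht hst
  have h₂ := mono (-1) (by norm_num) hs ht hst
  simp only [one_mul, neg_one_mul] at h₁ h₂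
  rw [abs_le]
  constructor <;> linarith

theorem abs_sub_average_le_of_abs_sub_le_sub {f g : ℝ → ℝ} {a b x : ℝ} (hab : a < b)
    (hf : ContinuousOn f (Icc a b)) (hg : ContinuousOn g (Icc a b)) (hx : x ∈ Icc a b)
    (hfg : ∀ s ∈ Icc a b, ∀ t ∈ Icc a b, s ≤ t → |f t - f s| ≤ g t - g s) :
    |f x - (1 / (b - a)) * ∫ t in a..b, f t| ≤
      (1 / (b - a)) * ((x - a) * g x - (∫ t in a..x, g t) + (∫ t in x..b, g t) - (b - x) * g x) := by
  have hint : ∀ {h : ℝ → ℝ}, ContinuousOn h (Icc a b) →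
      ∀ {u v}, u ∈ Icc a b → v ∈ Icc a b → IntervalIntegrable h MeasureTheory.volume u v :=
    fun hh _ _ hu hv => (hh.mono (uIcc_subset_Icc hu hv)).intervalIntegrable
  have ha : a ∈ Icc a b := left_mem_Icc.2 hab.le
  have hb : b ∈ Icc a b := right_mem_Icc.2 hab.le
  have hdev : ContinuousOn (fun t => |f x - f t|) (Icc a b) := (continuousOn_const.sub hf).abs
  have hmean : f x - (1 / (b - a)) * ∫ t in a..b, f t = (1 / (b - a)) * ∫ t in a..b, (f x - f t) := by
    rw [integral_sub intervalIntegrable_const (hint hf ha hb), integral_const]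
    field_simp [(sub_pos.2 hab).ne']
    ring
  have hleft : ∫ t in a..x, |f x - f t| ≤ ∫ t in a..x, (g x - g t) :=
    integral_mono_on hx.1 (hint hdev ha hx) (intervalIntegrable_const.sub (hint hg ha hx))
      fun t ht => hfg t ⟨ht.1, ht.2.trans hx.2⟩ x hx ht.2
  have hright : ∫ t in x..b, |f x - f t| ≤ ∫ t in x..b, (g t - g x) :=
    integral_mono_on hx.2 (hint hdev hx hb) ((hint hg hx hb).sub intervalIntegrable_const)
      fun t ht => abs_sub_comm (f x) (f t) ▸ hfg x hx t ⟨hx.1.trans ht.1, ht.2⟩ ht.1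
  rw [hmean, abs_mul, abs_of_pos (by simpa using hab)]
  gcongr
  calc |∫ t in a..b, (f x - f t)|
      ≤ ∫ t in a..b, |f x - f t| := abs_integral_le_integral_abs hab.le
    _ = (∫ t in a..x, |f x - f t|) + ∫ t in x..b, |f x - f t| :=
      (integral_add_adjacent_intervals (hint hdev ha hx) (hint hdev hx hb)).symm
    _ ≤ (∫ t in a..x, (g x - g t)) + ∫ t in x..b, (g t - g x) := add_le_add hleft hright
    _ = _ := by
      rw [integral_sub intervalIntegrable_const (hint hg ha hx),
        integral_sub (hint hg hx hb) intervalIntegrable_const, integral_const, integral_const,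
        smul_eq_mul, smul_eq_mul]
      ring

theorem le_sSup_mul_rpow_of_bddAbove {h : ℝ → ℝ} {s : Set ℝ} {p u : ℝ}
    (hbdd : BddAbove ((fun u => u ^ (1 - p) * h u) '' s)) (hu : u ∈ s) (hu₀ : 0 < u) :
    h u ≤ sSup ((fun u => u ^ (1 - p) * h u) '' s) * u ^ (p - 1) := by
  have hinv : u ^ (p - 1) * u ^ (1 - p) = 1 := by
    rw [← Real.rpow_add hu₀]
    norm_num
  calc h u = u ^ (p - 1) * (u ^ (1 - p) * h u) := by rw [← mul_assoc, hinv, one_mul]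
    _ ≤ u ^ (p - 1) * sSup ((fun u => u ^ (1 - p) * h u) '' s) :=
      mul_le_mul_of_nonneg_left (le_csSup hbdd (mem_image_of_mem _ hu)) (by positivity)
    _ = _ := mul_comm _ _

theorem abs_sub_average_le_of_abs_deriv_le_mul_rpow {f : ℝ → ℝ} {a b p K x : ℝ}
    (ha : 0 < a) (hab : a < b) (hp : p ≠ 0)
    (hf : ContinuousOn f (Icc a b)) (hd : DifferentiableOn ℝ f (Ioo a b))
    (hK : ∀ u ∈ Ioo a b, |deriv f u| ≤ K * u ^ (p - 1)) (hx : x ∈ Icc a b) :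
    |f x - (1 / (b - a)) * ∫ t in a..b, f t| ≤
      K / (p * (b - a)) *
        (2 * x ^ p * (x - (a + b) / 2) - (∫ t in a..x, t ^ p) + ∫ t in x..b, t ^ p) := by
  have hg : ContinuousOn (fun u : ℝ => K / p * u ^ p) (Icc a b) := fun u hu =>
    ((Real.continuousAt_rpow_const u p (Or.inl (ha.trans_le hu.1).ne')).const_mul _)
      |>.continuousWithinAt
  have hg' : ∀ u ∈ Ioo a b, HasDerivAt (fun u : ℝ => K / p * u ^ p) (K * u ^ (p - 1)) u := by
    intro u hu
    exact ((Real.hasDerivAt_rpow_const (Or.inl (ha.trans hu.1).ne')).const_mul (K / p)).congr_deriv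
      (by field_simp)
  refine (abs_sub_average_le_of_abs_sub_le_sub hab hf hg hx
    fun s hs t ht hst => abs_sub_le_sub_of_abs_deriv_le hf hd hg hg' hK hs ht hst).trans_eq ?_
  rw [integral_const_mul, integral_const_mul]
  field_simp [(sub_pos.2 hab).ne']
  ring

theorem integral_rpow_of_pos {a b r : ℝ} (ha : 0 < a) (hb : 0 < b) (hr : r ≠ -1) :
    ∫ t in a..b, t ^ r = (b ^ (r + 1) - a ^ (r + 1)) / (r + 1) :=
  integral_rpow (Or.inr ⟨hr, notMem_uIcc_of_lt ha hb⟩)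

theorem integral_rpow_neg_one_of_pos {a b : ℝ} (ha : 0 < a) (hb : 0 < b) :
    ∫ t in a..b, t ^ (-1 : ℝ) = Real.log b - Real.log a := by
  simp only [Real.rpow_neg_one]
  rw [integral_inv_of_pos ha hb, Real.log_div hb.ne' ha.ne']

/-- Theorem 1.2: an Ostrowski type inequality involving
`K_p(f') := sup_{u ∈ (a,b)} u^{1-p} |f'(u)|`. -/
theorem ostrowski_type_Kp (a b p : ℝ) (f : ℝ → ℝ)
    (ha : 0 < a) (hab : a < b) (hp : p ≠ 0)
    (hf : ContinuousOn f (Set.Icc a b))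
    (hd : DifferentiableOn ℝ f (Set.Ioo a b))
    (hbdd : BddAbove ((fun u => u ^ (1 - p) * |deriv f u|) '' Set.Ioo a b))
    (x : ℝ) (hx : x ∈ Set.Ioo a b) :
    (0 < p →
      |f x - (1 / (b - a)) * ∫ t in a..b, f t| ≤
        sSup ((fun u => u ^ (1 - p) * |deriv f u|) '' Set.Ioo a b) / (|p| * (b - a)) *
          (2 * x ^ p * (x - (a + b) / 2) +
            (b - x) * ((b ^ (p + 1) - x ^ (p + 1)) / ((p + 1) * (b - x))) -
            (x - a) * ((x ^ (p + 1) - a ^ (p + 1)) / ((p + 1) * (x - a))))) ∧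
    (p < 0 → p ≠ -1 →
      |f x - (1 / (b - a)) * ∫ t in a..b, f t| ≤
        sSup ((fun u => u ^ (1 - p) * |deriv f u|) '' Set.Ioo a b) / (|p| * (b - a)) *
          ((x - a) * ((x ^ (p + 1) - a ^ (p + 1)) / ((p + 1) * (x - a))) -
            (b - x) * ((b ^ (p + 1) - x ^ (p + 1)) / ((p + 1) * (b - x))) -
            2 * x ^ p * (x - (a + b) / 2))) ∧
    (p = -1 →
      |f x - (1 / (b - a)) * ∫ t in a..b, f t| ≤
        sSup ((fun u => u ^ (1 - p) * |deriv f u|) '' Set.Ioo a b) / (|p| * (b - a)) *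
          ((x - a) * ((Real.log x - Real.log a) / (x - a)) -
            (b - x) * ((Real.log b - Real.log x) / (b - x)) -
            2 / x * (x - (a + b) / 2))) := by
  obtain ⟨hax, hxb⟩ := hx
  have hx₀ : 0 < x := ha.trans hax
  have hxa : x - a ≠ 0 := sub_ne_zero.2 hax.ne'
  have hbx : b - x ≠ 0 := sub_ne_zero.2 hxb.ne'
  have hmain := abs_sub_average_le_of_abs_deriv_le_mul_rpow ha hab hp hf hd
    (fun u hu => le_sSup_mul_rpow_of_bddAbove hbdd hu (ha.trans hu.1)) ⟨hax.le, hxb.le⟩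
  generalize sSup ((fun u => u ^ (1 - p) * |deriv f u|) '' Ioo a b) = K at hmain ⊢
  refine ⟨fun hpos => ?_, fun hneg hp₁ => ?_, fun hp₁ => ?_⟩
  · rw [integral_rpow_of_pos ha hx₀ (by linarith), integral_rpow_of_pos hx₀ (ha.trans hab)
      (by linarith)] at hmain
    refine hmain.trans_eq ?_
    rw [abs_of_pos hpos]
    field_simp [show p + 1 ≠ 0 by linarith]
    ring
  · rw [integral_rpow_of_pos ha hx₀ hp₁, integral_rpow_of_pos hx₀ (ha.trans hab) hp₁] at hmain
    refine hmain.trans_eq ?_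
    rw [abs_of_neg hneg]
    field_simp [show p + 1 ≠ 0 from fun h => hp₁ (by linarith)]
    ring
  · subst hp₁
    rw [integral_rpow_neg_one_of_pos ha hx₀, integral_rpow_neg_one_of_pos hx₀ (ha.trans hab),
      Real.rpow_neg_one] at hmain
    refine hmain.trans_eq ?_
    rw [abs_neg, abs_one, neg_one_mul, div_neg, neg_mul]
    field_simp
    ring
end

section
/- Let f : [a,b] → ℝ be continuous on [a,b] with a > 0 and differentiable on (a,b). If P(f′) := sup over u ∈ (a,b) of |u·f′(u)| is finite, then for any x ∈ (a,b), |f(x) − (1/(b−a))·∫ₐᵇ f(t) dt| ≤ (P(f′)/(b−a))·[ ln( I(x,b)^{b−x} / I(a,x)^{x−a} ) + 2(x − A)·ln x ]. -/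
/-!
Cauchy's mean value theorem applied to `f` and `log` shows that `f` is `P(f')`-Lipschitz with
respect to `log`, i.e. `|f x - f t| ≤ P(f') |log x - log t|`. Averaging over `t ∈ [a, b]` bounds
the deviation of `f x` from the mean of `f` by `P(f') / (b - a) · ∫ₐᵇ |log x - log t| dt`, and this
integral, computed from `∫ log = t log t - t`, is exactly the bracket written with identric means.
-/

open Real Set intervalIntegral

theorem abs_sub_le_mul_log_sub_log_of_lt {f : ℝ → ℝ} {x t P : ℝ} (hx : 0 < x) (hxt : x < t)
    (hf : ContinuousOn f (Icc x t)) (hd : DifferentiableOn ℝ f (Ioo x t))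
    (hP : ∀ u ∈ Ioo x t, |u * deriv f u| ≤ P) :
    |f t - f x| ≤ P * (log t - log x) := by
  obtain ⟨c, hc, hcauchy⟩ := exists_ratio_hasDerivAt_eq_ratio_slope f (deriv f) hxt hf
    (fun u hu => (hd.differentiableAt (Ioo_mem_nhds hu.1 hu.2)).hasDerivAt) log (·⁻¹)
    (continuousOn_log.mono fun u hu => (hx.trans_le hu.1).ne')
    (fun u hu => hasDerivAt_log (hx.trans hu.1).ne')
  have hc0 : 0 < c := hx.trans hc.1
  have hlog : 0 ≤ log t - log x := sub_nonneg.2 (log_le_log hx hxt.le)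
  have hslope : f t - f x = (log t - log x) * (c * deriv f c) := by
    field_simp at hcauchy
    linear_combination -hcauchy
  rw [hslope, abs_mul, abs_of_nonneg hlog, mul_comm]
  exact mul_le_mul_of_nonneg_right (hP c hc) hlog

theorem abs_sub_le_mul_abs_log_sub_log {f : ℝ → ℝ} {a b P : ℝ} (ha : 0 < a)
    (hf : ContinuousOn f (Icc a b)) (hd : DifferentiableOn ℝ f (Ioo a b))
    (hP : ∀ u ∈ Ioo a b, |u * deriv f u| ≤ P) {x t : ℝ} (hx : x ∈ Icc a b) (ht : t ∈ Icc a b) :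
    |f x - f t| ≤ P * |log x - log t| := by
  wlog hxt : x ≤ t generalizing x t
  · rw [abs_sub_comm, abs_sub_comm (log x)]
    exact this ht hx (le_of_not_ge hxt)
  obtain rfl | hxt := hxt.eq_or_lt
  · simp
  have hx0 : 0 < x := ha.trans_le hx.1
  rw [abs_sub_comm, abs_sub_comm (log x), abs_of_nonneg (sub_nonneg.2 (log_le_log hx0 hxt.le))]
  exact abs_sub_le_mul_log_sub_log_of_lt hx0 hxt (hf.mono (Icc_subset_Icc hx.1 ht.2))
    (hd.mono (Ioo_subset_Ioo hx.1 ht.2)) fun u hu => hP u ⟨hx.1.trans_lt hu.1, hu.2.trans_le ht.2⟩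

theorem abs_sub_average_le {f g : ℝ → ℝ} {a b : ℝ} (x : ℝ) (hab : a < b)
    (hf : IntervalIntegrable f MeasureTheory.volume a b)
    (hg : IntervalIntegrable g MeasureTheory.volume a b)
    (hfg : ∀ t ∈ Icc a b, |f x - f t| ≤ g t) :
    |f x - (1 / (b - a)) * ∫ t in a..b, f t| ≤ (1 / (b - a)) * ∫ t in a..b, g t := by
  have hba : 0 < 1 / (b - a) := one_div_pos.2 (sub_pos.2 hab)
  have hdev : f x - (1 / (b - a)) * ∫ t in a..b, f t = (1 / (b - a)) * ∫ t in a..b, f x - f t := by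
    rw [integral_sub intervalIntegrable_const hf, integral_const, smul_eq_mul]
    field_simp [(sub_pos.2 hab).ne']
  rw [hdev, abs_mul, abs_of_pos hba]
  gcongr
  calc |∫ t in a..b, f x - f t| ≤ ∫ t in a..b, |f x - f t| :=
        abs_integral_le_integral_abs hab.le
    _ ≤ ∫ t in a..b, g t :=
        integral_mono_on hab.le (intervalIntegrable_const.sub hf).abs hg hfg

theorem integral_abs_log_sub_log {a b x : ℝ} (ha : 0 < a) (hax : a ≤ x) (hxb : x ≤ b) :
    ∫ t in a..b, |log x - log t| = a * log a + b * log b - (a + b) * log x + 2 * x - a - b := by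
  have hint : ∀ c d, IntervalIntegrable (fun t => |log x - log t|) MeasureTheory.volume c d :=
    fun _ _ => (intervalIntegrable_const.sub intervalIntegrable_log').abs
  have hleft : ∫ t in a..x, |log x - log t| = ∫ t in a..x, log x - log t :=
    integral_congr fun t ht => by
      rw [uIcc_of_le hax] at ht
      exact abs_of_nonneg (sub_nonneg.2 (log_le_log (ha.trans_le ht.1) ht.2))
  have hright : ∫ t in x..b, |log x - log t| = ∫ t in x..b, log t - log x :=
    integral_congr fun t ht => by
      rw [uIcc_of_le hxb] at ht
      rw [abs_sub_comm]
      exact abs_of_nonneg (sub_nonneg.2 (log_le_log (ha.trans_le hax) ht.1))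
  rw [← integral_add_adjacent_intervals (hint a x) (hint x b), hleft, hright,
    integral_sub intervalIntegrable_const intervalIntegrable_log',
    integral_sub intervalIntegrable_log' intervalIntegrable_const, integral_log, integral_log,
    integral_const, integral_const, smul_eq_mul, smul_eq_mul]
  ring

theorem log_identric_rpow {u v : ℝ} (hu : 0 < u) (huv : u < v) :
    log ((1 / exp 1 * (v ^ v / u ^ u) ^ (1 / (v - u))) ^ (v - u)) =
      v * log v - u * log u - (v - u) := by
  have hv : 0 < v := hu.trans huv
  have hvu : v - u ≠ 0 := (sub_pos.2 huv).ne'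
  rw [log_rpow (by positivity), log_mul (by positivity) (by positivity), log_rpow (by positivity),
    one_div (exp 1), log_inv, log_exp, log_div (by positivity) (by positivity), log_rpow hv,
    log_rpow hu]
  field_simp
  ring

/-- Theorem 1.3: an Ostrowski type inequality involving
`P(f') := sup_{u ∈ (a,b)} |u f'(u)|` and the identric mean. -/
theorem ostrowski_type_identric (a b : ℝ) (f : ℝ → ℝ)
    (ha : 0 < a) (hab : a < b)
    (hf : ContinuousOn f (Set.Icc a b))
    (hd : DifferentiableOn ℝ f (Set.Ioo a b))
    (hbdd : BddAbove ((fun u => |u * deriv f u|) '' Set.Ioo a b))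
    (x : ℝ) (hx : x ∈ Set.Ioo a b) :
    |f x - (1 / (b - a)) * ∫ t in a..b, f t| ≤
      sSup ((fun u => |u * deriv f u|) '' Set.Ioo a b) / (b - a) *
        (Real.log
          ((1 / Real.exp 1 * (b ^ b / x ^ x) ^ (1 / (b - x))) ^ (b - x) /
            (1 / Real.exp 1 * (x ^ x / a ^ a) ^ (1 / (x - a))) ^ (x - a)) +
          2 * (x - (a + b) / 2) * Real.log x) := by
  set P := sSup ((fun u => |u * deriv f u|) '' Set.Ioo a b)
  have hP : ∀ u ∈ Ioo a b, |u * deriv f u| ≤ P := fun u hu => le_csSup hbdd (mem_image_of_mem _ hu)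
  have hx0 : 0 < x := ha.trans hx.1
  have hb0 : 0 < b := ha.trans hab
  calc |f x - (1 / (b - a)) * ∫ t in a..b, f t|
      ≤ (1 / (b - a)) * ∫ t in a..b, P * |log x - log t| :=
        abs_sub_average_le x hab (hf.intervalIntegrable_of_Icc hab.le)
          ((intervalIntegrable_const.sub intervalIntegrable_log').abs.const_mul P)
          fun t ht => abs_sub_le_mul_abs_log_sub_log ha hf hd hP (Ioo_subset_Icc_self hx) ht
    _ = _ := by
        rw [integral_const_mul, integral_abs_log_sub_log ha hx.1.le hx.2.le,
          log_div (by positivity) (by positivity), log_identric_rpow hx0 hx.2,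
          log_identric_rpow ha hx.1]
        ring
end
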